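/- arXiv:1507.04660 — 6 statements merged into one kernel-verified Lean document; each statement's English description precedes it below -/
import Mathlib

section
/- Suppose the graph 𝒢 = (V,E) with E = {{i,j} : W_{i,j} > 0} is connected. Let β ∈ (0,∞)^V with 2β − P positive definite, let G = (2β − P)^{−1}, and fix i₀ ∈ V. Then the function u : V → ℝ defined by e^{u_j} = G(i₀,j)/G(i₀,i₀) is the unique solution of the system: Σ_{j∼i} (1/2) W_{i,j} e^{u_j − u_i} = β_i for all i ≠ i₀, together with u_{i₀} = 0 (where j ∼ i means {i,j} ∈ E). -/
open MeasureTheory Real Finset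

/-- The matrix `2β - P` with diagonal entries `2 βᵢ` and off-diagonal entries `-W i j`. -/
noncomputable def Mmat (n : ℕ) (W : Fin n → Fin n → ℝ) (β : Fin n → ℝ) :
    Matrix (Fin n) (Fin n) ℝ :=
  Matrix.of fun i j => if i = j then 2 * β i else -(W i j)

section Aux

open Matrix

variable {n : ℕ} {W : Fin n → Fin n → ℝ} {β : Fin n → ℝ}

/-- Row expansion of `Mmat` applied to a vector. -/
lemma Mmat_mulVec_apply (hnn : ∀ i j, i ≠ j → 0 ≤ W i j) (x : Fin n → ℝ) (i : Fin n) :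
    (Mmat n W β *ᵥ x) i =
      2 * β i * x i - ∑ j ∈ Finset.univ.filter (fun j => j ≠ i ∧ 0 < W i j), W i j * x j := by
  have hexp : (Mmat n W β *ᵥ x) i = ∑ j, Mmat n W β i j * x j := rfl
  rw [hexp, ← Finset.add_sum_erase _ _ (Finset.mem_univ i)]
  have hdiag : Mmat n W β i i * x i = 2 * β i * x i := by simp [Mmat]
  have h1 : ∑ j ∈ Finset.univ.erase i, Mmat n W β i j * x j
      = ∑ j ∈ Finset.univ.erase i, -(W i j * x j) := by
    refine Finset.sum_congr rfl fun j hj => ?_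
    have hji : j ≠ i := (Finset.mem_erase.mp hj).1
    simp [Mmat, (Ne.symm hji : i ≠ j)]
  have h2 : ∑ j ∈ Finset.univ.filter (fun j => j ≠ i ∧ 0 < W i j), W i j * x j
      = ∑ j ∈ Finset.univ.erase i, W i j * x j := by
    refine Finset.sum_subset ?_ ?_
    · intro j hj
      rcases Finset.mem_filter.mp hj with ⟨_, hji, _⟩
      exact Finset.mem_erase.mpr ⟨hji, Finset.mem_univ j⟩
    · intro j hj hjn
      have hji : j ≠ i := (Finset.mem_erase.mp hj).1
      have : ¬ (0 < W i j) := by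
        intro hw
        exact hjn (Finset.mem_filter.mpr ⟨Finset.mem_univ j, hji, hw⟩)
      have : W i j = 0 := le_antisymm (not_lt.mp this) (hnn i j (Ne.symm hji))
      simp [this]
  rw [hdiag, h1, h2, Finset.sum_neg_distrib]
  ring

end Aux

theorem stmt7 (n : ℕ) (W : Fin n → Fin n → ℝ)
    (hsym : ∀ i j, W i j = W j i) (hnn : ∀ i j, i ≠ j → 0 ≤ W i j)
    (hconn : ∀ i j : Fin n, Relation.ReflTransGen (fun a b => 0 < W a b) i j)
    (β : Fin n → ℝ) (hβ : ∀ i, 0 < β i) (hpd : (Mmat n W β).PosDef)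
    (i₀ : Fin n) :
    let G := (Mmat n W β)⁻¹
    let u₀ : Fin n → ℝ := fun j => Real.log (G i₀ j / G i₀ i₀)
    (u₀ i₀ = 0 ∧ ∀ i, i ≠ i₀ →
        ∑ j ∈ Finset.univ.filter (fun j => j ≠ i ∧ 0 < W i j),
          (1 / 2) * W i j * Real.exp (u₀ j - u₀ i) = β i) ∧
      ∀ u : Fin n → ℝ,
        (u i₀ = 0 ∧ ∀ i, i ≠ i₀ →
          ∑ j ∈ Finset.univ.filter (fun j => j ≠ i ∧ 0 < W i j),
            (1 / 2) * W i j * Real.exp (u j - u i) = β i) →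
        u = u₀ := by
  intro G u₀
  set M := Mmat n W β with hMdef
  have hMdet : IsUnit M.det := (hpd.det_pos.ne').isUnit
  have hGM : G * M = 1 := Matrix.nonsing_inv_mul M hMdet
  have hMsymm : ∀ a b, M a b = M b a := by
    intro a b
    by_cases h : a = b
    · simp [h]
    · simp [hMdef, Mmat, h, Ne.symm h, hsym a b]
  set g : Fin n → ℝ := fun j => G i₀ j with hgdef
  -- M *ᵥ g is the indicator of i₀
  have hMg : ∀ i, (Matrix.mulVec M g) i = if i = i₀ then 1 else 0 := by
    intro i
    have h1 : ∑ j, G i₀ j * M j i = (1 : Matrix (Fin n) (Fin n) ℝ) i₀ i := by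
      rw [← Matrix.mul_apply, hGM]
    have h2 : (Matrix.mulVec M g) i = ∑ j, G i₀ j * M j i := by
      show ∑ j, M i j * g j = ∑ j, G i₀ j * M j i
      refine Finset.sum_congr rfl fun j _ => ?_
      rw [hMsymm i j, mul_comm]
    rw [h2, h1, Matrix.one_apply]
    simp [eq_comm]
  -- the row identity for g at i ≠ i₀
  have hrow : ∀ i, i ≠ i₀ → 2 * β i * g i
      = ∑ j ∈ Finset.univ.filter (fun j => j ≠ i ∧ 0 < W i j), W i j * g j := by
    intro i hi
    have h1 := Mmat_mulVec_apply (β := β) hnn g i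
    rw [hMg i, if_neg hi] at h1
    linarith [h1]
  -- nonnegativity of g
  have hg0 : ∀ j, 0 ≤ g j := by
    by_contra hcon
    push_neg at hcon
    obtain ⟨j₀, hj₀⟩ := hcon
    set m : Fin n → ℝ := fun j => max (-(g j)) 0 with hmdef
    set p : Fin n → ℝ := fun j => max (g j) 0 with hpdef
    have hmnn : ∀ j, 0 ≤ m j := fun j => le_max_right _ _
    have hpnn : ∀ j, 0 ≤ p j := fun j => le_max_right _ _
    have hgpm : g = p - m := by
      funext j
      show g j = p j - m j
      rcases le_total (g j) 0 with h | h
      · have h1 : p j = 0 := max_eq_right h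
        have h2 : m j = -(g j) := max_eq_left (by linarith)
        rw [h1, h2]; ring
      · have h1 : p j = g j := max_eq_left h
        have h2 : m j = 0 := max_eq_right (by linarith)
        rw [h1, h2]; ring
    have hmp0 : ∀ j, m j * p j = 0 := by
      intro j
      rcases le_total (g j) 0 with h | h
      · have : p j = 0 := max_eq_right h
        rw [this, mul_zero]
      · have : m j = 0 := max_eq_right (by linarith)
        rw [this, zero_mul]
    have hmne : m ≠ 0 := by
      intro h
      have h1 := congrFun h j₀
      have h2 : m j₀ = -(g j₀) := max_eq_left (by linarith)
      rw [h2] at h1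
      simp only [Pi.zero_apply] at h1
      linarith
    have hposQ : 0 < dotProduct m (Matrix.mulVec M m) := by
      have := hpd.dotProduct_mulVec_pos hmne
      simpa using this
    have hQmg : dotProduct m (Matrix.mulVec M g) = m i₀ := by
      have : dotProduct m (Matrix.mulVec M g) = ∑ i, m i * (Matrix.mulVec M g) i := rfl
      rw [this]
      simp [hMg, mul_ite]
    have hQmp : dotProduct m (Matrix.mulVec M p) ≤ 0 := by
      have hexp : dotProduct m (Matrix.mulVec M p) = ∑ i, ∑ j, m i * (M i j * p j) := by
        simp [dotProduct, Matrix.mulVec, Finset.mul_sum]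
      rw [hexp]
      refine Finset.sum_nonpos fun i _ => Finset.sum_nonpos fun j _ => ?_
      by_cases h : i = j
      · subst h
        have : M i i = 2 * β i := by simp [hMdef, Mmat]
        rw [this]
        have h0 : m i * (2 * β i * p i) = 2 * β i * (m i * p i) := by ring
        rw [h0, hmp0 i, mul_zero]
      · have : M i j = -(W i j) := by simp [hMdef, Mmat, h]
        rw [this]
        have := mul_nonneg (mul_nonneg (hmnn i) (hnn i j h)) (hpnn j)
        nlinarith
    have hsub : dotProduct m (Matrix.mulVec M g)
        = dotProduct m (Matrix.mulVec M p) - dotProduct m (Matrix.mulVec M m) := by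
      rw [hgpm, Matrix.mulVec_sub, dotProduct_sub]
    have := hmnn i₀
    rw [hQmg] at hsub
    linarith
  -- positivity at i₀
  have hGpd : G.PosDef := hpd.inv
  have hgi₀ : 0 < g i₀ := by
    have hne : (Pi.single i₀ 1 : Fin n → ℝ) ≠ 0 := by
      intro h
      have := congrFun h i₀
      simp at this
    have h1 := hGpd.dotProduct_mulVec_pos hne
    have h2 : dotProduct (Pi.single i₀ 1 : Fin n → ℝ) (Matrix.mulVec G (Pi.single i₀ 1)) = G i₀ i₀ := by
      simp [dotProduct, Matrix.mulVec, Pi.single_apply, mul_ite, ite_mul]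
    simpa [h2] using h1
  -- strict positivity everywhere
  have hpos : ∀ i, 0 < g i := by
    intro i
    rcases (hg0 i).lt_or_eq with h | h
    · exact h
    · exfalso
      have key : ∀ a, Relation.ReflTransGen (fun a b => 0 < W a b) a i₀ → g a = 0 → False := by
        intro a hrel
        induction hrel using Relation.ReflTransGen.head_induction_on with
        | refl =>
          intro h0
          rw [h0] at hgi₀
          exact lt_irrefl _ hgi₀
        | @head a' c' hab hbc ih =>
          intro h0
          by_cases hai : a' = i₀
          · rw [hai] at h0
            rw [h0] at hgi₀
            exact lt_irrefl _ hgi₀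
          · have hr := hrow a' hai
            rw [h0, mul_zero] at hr
            have hterms : ∀ j ∈ Finset.univ.filter (fun j => j ≠ a' ∧ 0 < W a' j),
                W a' j * g j = 0 := by
              rw [← Finset.sum_eq_zero_iff_of_nonneg]
              · exact hr.symm
              · intro j hj
                rcases Finset.mem_filter.mp hj with ⟨_, _, hw⟩
                exact mul_nonneg hw.le (hg0 j)
            by_cases hca : c' = a'
            · exact ih (hca ▸ h0)
            · have hcmem : c' ∈ Finset.univ.filter (fun j => j ≠ a' ∧ 0 < W a' j) :=
                Finset.mem_filter.mpr ⟨Finset.mem_univ _, hca, hab⟩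
              have := hterms c' hcmem
              have hgc : g c' = 0 := by
                rcases mul_eq_zero.mp this with h' | h'
                · exact absurd h' (ne_of_gt hab)
                · exact h'
              exact ih hgc
      exact key i (hconn i i₀) h.symm
  -- exponentials of u₀
  have hgne : ∀ j, g j ≠ 0 := fun j => (hpos j).ne'
  have hexp : ∀ j, Real.exp (u₀ j) = g j / g i₀ := by
    intro j
    exact Real.exp_log (div_pos (hpos j) (hpos i₀))
  have hu₀i₀ : u₀ i₀ = 0 := by
    show Real.log (G i₀ i₀ / G i₀ i₀) = 0
    rw [div_self (hgne i₀), Real.log_one]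
  -- existence
  have hu₀eq : ∀ i, i ≠ i₀ →
      ∑ j ∈ Finset.univ.filter (fun j => j ≠ i ∧ 0 < W i j),
        (1 / 2) * W i j * Real.exp (u₀ j - u₀ i) = β i := by
    intro i hi
    have hterm : ∀ j, (1 / 2 : ℝ) * W i j * Real.exp (u₀ j - u₀ i)
        = (W i j * g j) * (1 / (2 * g i)) := by
      intro j
      rw [Real.exp_sub, hexp, hexp]
      field_simp
    calc ∑ j ∈ Finset.univ.filter (fun j => j ≠ i ∧ 0 < W i j),
          (1 / 2) * W i j * Real.exp (u₀ j - u₀ i)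
        = ∑ j ∈ Finset.univ.filter (fun j => j ≠ i ∧ 0 < W i j),
            (W i j * g j) * (1 / (2 * g i)) := Finset.sum_congr rfl fun j _ => hterm j
      _ = (∑ j ∈ Finset.univ.filter (fun j => j ≠ i ∧ 0 < W i j),
            W i j * g j) * (1 / (2 * g i)) := (Finset.sum_mul _ _ _).symm
      _ = (2 * β i * g i) * (1 / (2 * g i)) := by rw [← hrow i hi]
      _ = β i := by field_simp [hgne i]
  refine ⟨⟨hu₀i₀, hu₀eq⟩, ?_⟩
  -- uniqueness
  intro u ⟨hu0, hueq⟩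
  -- from equations to linear system
  have hMv : ∀ (uu : Fin n → ℝ),
      (∀ i, i ≠ i₀ → ∑ j ∈ Finset.univ.filter (fun j => j ≠ i ∧ 0 < W i j),
        (1 / 2) * W i j * Real.exp (uu j - uu i) = β i) →
      ∀ i, i ≠ i₀ → (Matrix.mulVec M (fun j => Real.exp (uu j))) i = 0 := by
    intro uu huu i hi
    rw [Mmat_mulVec_apply hnn]
    have h2 := huu i hi
    have h3 : ∑ j ∈ Finset.univ.filter (fun j => j ≠ i ∧ 0 < W i j),
        W i j * Real.exp (uu j) = 2 * β i * Real.exp (uu i) := by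
      have h4 : ∑ j ∈ Finset.univ.filter (fun j => j ≠ i ∧ 0 < W i j),
          ((1 / 2 : ℝ) * W i j * Real.exp (uu j - uu i)) * (2 * Real.exp (uu i))
          = β i * (2 * Real.exp (uu i)) := by
        rw [← Finset.sum_mul, h2]
      have h5 : ∀ j, ((1 / 2 : ℝ) * W i j * Real.exp (uu j - uu i)) * (2 * Real.exp (uu i))
          = W i j * Real.exp (uu j) := by
        intro j
        rw [Real.exp_sub]
        have := Real.exp_ne_zero (uu i)
        field_simp
      rw [Finset.sum_congr rfl fun j _ => h5 j] at h4
      rw [h4]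
      ring
    rw [h3]
    ring
  have hMvu := hMv u hueq
  have hMvu₀ := hMv u₀ hu₀eq
  set w : Fin n → ℝ := (fun j => Real.exp (u j)) - (fun j => Real.exp (u₀ j)) with hwdef
  have hw : ∀ i, i ≠ i₀ → (Matrix.mulVec M w) i = 0 := by
    intro i hi
    rw [hwdef, Matrix.mulVec_sub]
    have : (Matrix.mulVec M (fun j => Real.exp (u j)) -
        Matrix.mulVec M (fun j => Real.exp (u₀ j))) i
        = (Matrix.mulVec M (fun j => Real.exp (u j))) i -
          (Matrix.mulVec M (fun j => Real.exp (u₀ j))) i := rfl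
    rw [this, hMvu i hi, hMvu₀ i hi, sub_zero]
  have hwi₀ : w i₀ = 0 := by
    have : w i₀ = Real.exp (u i₀) - Real.exp (u₀ i₀) := rfl
    rw [this, hu0, hu₀i₀, sub_self]
  have hGw : ∀ i, w i = G i i₀ * (Matrix.mulVec M w) i₀ := by
    intro i
    have h1 : Matrix.mulVec G (Matrix.mulVec M w) = w := by
      rw [Matrix.mulVec_mulVec, hGM, Matrix.one_mulVec]
    have h2 : (Matrix.mulVec G (Matrix.mulVec M w)) i
        = ∑ j, G i j * (Matrix.mulVec M w) j := rfl
    rw [← congrFun h1 i, h2]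
    rw [Finset.sum_eq_single i₀]
    · intro j _ hj
      rw [hw j hj, mul_zero]
    · intro h
      exact absurd (Finset.mem_univ i₀) h
  have hc : (Matrix.mulVec M w) i₀ = 0 := by
    have h1 := hGw i₀
    rw [hwi₀] at h1
    rcases mul_eq_zero.mp h1.symm with h' | h'
    · exact absurd h' (hgne i₀)
    · exact h'
  have hwzero : ∀ i, w i = 0 := by
    intro i
    rw [hGw i, hc, mul_zero]
  funext i
  have h1 : Real.exp (u i) - Real.exp (u₀ i) = 0 := hwzero i
  have h2 : Real.exp (u i) = Real.exp (u₀ i) := by linarith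
  exact Real.exp_eq_exp.mp h2
end

section
/- Suppose the graph 𝒢 = (V,E) with E = {{i,j} : W_{i,j} > 0} is connected, and fix i₀ ∈ V. Let (u_j)_{j∈V} ∈ ℝ^V with u_{i₀} = 0 and let γ > 0. Define β ∈ ℝ^V by β_i = Σ_{j∼i} (1/2) W_{i,j} e^{u_j − u_i} + 1_{{i=i₀}} γ. Then the matrix 2β − P is positive definite. -/
open MeasureTheory Real Finset

private lemma Dswap (n : ℕ) (f : Fin n → Fin n → ℝ) :
    ∑ i : Fin n, ∑ j : Fin n, (if i = j then 0 else f i j)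
      = ∑ i : Fin n, ∑ j : Fin n, (if i = j then 0 else f j i) := by
  rw [Finset.sum_comm]
  refine Finset.sum_congr rfl fun i _ => Finset.sum_congr rfl fun j _ => ?_
  by_cases h : i = j
  · simp [h]
  · simp [h, Ne.symm h]

private lemma Dadd (n : ℕ) (f g : Fin n → Fin n → ℝ) :
    (∑ i : Fin n, ∑ j : Fin n, (if i = j then 0 else f i j))
      + (∑ i : Fin n, ∑ j : Fin n, (if i = j then 0 else g i j))
    = ∑ i : Fin n, ∑ j : Fin n, (if i = j then 0 else f i j + g i j) := by
  rw [← Finset.sum_add_distrib]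
  refine Finset.sum_congr rfl fun i _ => ?_
  rw [← Finset.sum_add_distrib]
  refine Finset.sum_congr rfl fun j _ => ?_
  by_cases h : i = j <;> simp [h]

theorem stmt9 (n : ℕ) (W : Fin n → Fin n → ℝ)
    (hsym : ∀ i j, W i j = W j i) (hnn : ∀ i j, i ≠ j → 0 ≤ W i j)
    (hconn : ∀ i j : Fin n, Relation.ReflTransGen (fun a b => 0 < W a b) i j)
    (i₀ : Fin n) (u : Fin n → ℝ) (hu : u i₀ = 0) (γ : ℝ) (hγ : 0 < γ)
    (β : Fin n → ℝ)
    (hβ : ∀ i, β i = (∑ j ∈ Finset.univ.filter (fun j => j ≠ i ∧ 0 < W i j),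
        (1 / 2) * W i j * Real.exp (u j - u i)) + (if i = i₀ then γ else 0)) :
    (Mmat n W β).PosDef := by
  rw [Matrix.posDef_iff_dotProduct_mulVec]
  constructor
  · -- Hermitian
    ext i j
    simp only [Mmat, Matrix.conjTranspose_apply, Matrix.of_apply, star_trivial]
    by_cases h : i = j
    · simp [h]
    · simp [h, Ne.symm h, hsym j i]
  intro x hx
  have key : ∀ y : Fin n → ℝ, dotProduct y ((Mmat n W β).mulVec y)
      = 2 * γ * y i₀ ^ 2 + ∑ i : Fin n, ∑ j : Fin n, (if i = j then 0 else
          W i j * (Real.exp ((u j - u i) / 2) * y i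
            - Real.exp ((u i - u j) / 2) * y j) ^ 2 / 2) := by
    intro y
    have expand : dotProduct y ((Mmat n W β).mulVec y)
        = (∑ i : Fin n, 2 * β i * y i ^ 2)
          + ∑ i : Fin n, ∑ j : Fin n, (if i = j then 0 else -(W i j) * y i * y j) := by
      simp only [dotProduct, Matrix.mulVec, Mmat, Matrix.of_apply,
        Finset.mul_sum]
      rw [← Finset.sum_add_distrib]
      refine Finset.sum_congr rfl fun i _ => ?_
      have : ∀ j : Fin n, y i * ((if i = j then 2 * β i else -(W i j)) * y j)
          = (if i = j then 2 * β i * y i ^ 2 else 0)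
            + (if i = j then 0 else -(W i j) * y i * y j) := by
        intro j
        by_cases h : i = j
        · simp [h]; ring
        · simp [h]; ring
      simp_rw [this]
      rw [Finset.sum_add_distrib, Finset.sum_ite_eq univ i
        (fun _ => 2 * β i * y i ^ 2)]
      simp
    rw [expand]
    -- expand the β part
    have hβpart : (∑ i : Fin n, 2 * β i * y i ^ 2)
        = 2 * γ * y i₀ ^ 2
          + ∑ i : Fin n, ∑ j : Fin n, (if i = j then 0 else
              W i j * Real.exp (u j - u i) * y i ^ 2) := by
      have : ∀ i : Fin n, 2 * β i * y i ^ 2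
          = (if i = i₀ then 2 * γ * y i ^ 2 else 0)
            + ∑ j : Fin n, (if i = j then 0 else
                W i j * Real.exp (u j - u i) * y i ^ 2) := by
        intro i
        rw [hβ i]
        rw [Finset.sum_filter]
        have h2 : ∀ j : Fin n, (if j ≠ i ∧ 0 < W i j then
              1 / 2 * W i j * Real.exp (u j - u i) else 0) * 2 * y i ^ 2
            = (if i = j then 0 else W i j * Real.exp (u j - u i) * y i ^ 2) := by
          intro j
          by_cases h : i = j
          · rw [if_pos h, if_neg (fun hc : j ≠ i ∧ 0 < W i j => hc.1 h.symm)]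
            ring
          · by_cases hw : 0 < W i j
            · rw [if_pos ⟨Ne.symm h, hw⟩, if_neg h]; ring
            · have hw0 : W i j = 0 := le_antisymm (not_lt.1 hw) (hnn i j h)
              rw [if_neg (fun hc : j ≠ i ∧ 0 < W i j => hw hc.2), if_neg h, hw0]
              ring
        calc 2 * ((∑ j : Fin n, if j ≠ i ∧ 0 < W i j then
                1 / 2 * W i j * Real.exp (u j - u i) else 0)
              + (if i = i₀ then γ else 0)) * y i ^ 2
            = (if i = i₀ then 2 * γ * y i ^ 2 else 0)
              + ∑ j : Fin n, ((if j ≠ i ∧ 0 < W i j then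
                  1 / 2 * W i j * Real.exp (u j - u i) else 0) * 2 * y i ^ 2) := by
              have hs : ∑ j : Fin n, ((if j ≠ i ∧ 0 < W i j then
                  1 / 2 * W i j * Real.exp (u j - u i) else 0) * 2 * y i ^ 2)
                = (∑ j : Fin n, if j ≠ i ∧ 0 < W i j then
                    1 / 2 * W i j * Real.exp (u j - u i) else 0) * 2 * y i ^ 2 := by
                rw [Finset.sum_mul, Finset.sum_mul]
              rw [hs]
              by_cases h : i = i₀
              · rw [if_pos h, if_pos h]; ring
              · rw [if_neg h, if_neg h]; ring
          _ = (if i = i₀ then 2 * γ * y i ^ 2 else 0)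
              + ∑ j : Fin n, (if i = j then 0 else
                  W i j * Real.exp (u j - u i) * y i ^ 2) := by
              rw [Finset.sum_congr rfl fun j _ => h2 j]
      simp_rw [this]
      rw [Finset.sum_add_distrib]
      congr 1
      rw [Finset.sum_ite_eq' univ i₀ (fun i => 2 * γ * y i ^ 2)]
      simp
    rw [hβpart]
    rw [add_assoc]
    congr 1
    -- now: ∑∑ ite (W e^d y i²) + ∑∑ ite (-(W) y i y j) = ∑∑ ite (W (...)² / 2)
    have sq_expand : ∀ i j : Fin n, W i j * (Real.exp ((u j - u i) / 2) * y i
          - Real.exp ((u i - u j) / 2) * y j) ^ 2 / 2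
        = W i j * Real.exp (u j - u i) * y i ^ 2 / 2
          + W i j * Real.exp (u i - u j) * y j ^ 2 / 2
          - W i j * y i * y j := by
      intro i j
      have e1 : Real.exp ((u j - u i) / 2) * Real.exp ((u j - u i) / 2)
          = Real.exp (u j - u i) := by rw [← Real.exp_add]; ring_nf
      have e2 : Real.exp ((u i - u j) / 2) * Real.exp ((u i - u j) / 2)
          = Real.exp (u i - u j) := by rw [← Real.exp_add]; ring_nf
      have e3 : Real.exp ((u j - u i) / 2) * Real.exp ((u i - u j) / 2) = 1 := by
        rw [← Real.exp_add]; ring_nf; exact Real.exp_zero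
      have expand2 : (Real.exp ((u j - u i) / 2) * y i
            - Real.exp ((u i - u j) / 2) * y j) ^ 2
          = Real.exp (u j - u i) * y i ^ 2 + Real.exp (u i - u j) * y j ^ 2
            - 2 * (y i * y j) := by
        linear_combination (y i ^ 2) * e1 + (y j ^ 2) * e2 - (2 * (y i * y j)) * e3
      rw [expand2]; ring
    have swap1 : (∑ i : Fin n, ∑ j : Fin n, (if i = j then 0 else
          W i j * Real.exp (u j - u i) * y i ^ 2 / 2))
        = ∑ i : Fin n, ∑ j : Fin n, (if i = j then 0 else
            W i j * Real.exp (u i - u j) * y j ^ 2 / 2) := by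
      rw [Dswap n (fun i j => W i j * Real.exp (u j - u i) * y i ^ 2 / 2)]
      refine Finset.sum_congr rfl fun i _ => Finset.sum_congr rfl fun j _ => ?_
      by_cases h : i = j
      · simp [h]
      · simp [h, hsym j i]
    have rhs1 : (∑ i : Fin n, ∑ j : Fin n, (if i = j then 0 else
          W i j * (Real.exp ((u j - u i) / 2) * y i
            - Real.exp ((u i - u j) / 2) * y j) ^ 2 / 2))
        = (∑ i : Fin n, ∑ j : Fin n, (if i = j then 0 else
            W i j * Real.exp (u j - u i) * y i ^ 2 / 2))
          + ((∑ i : Fin n, ∑ j : Fin n, (if i = j then 0 else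
              W i j * Real.exp (u i - u j) * y j ^ 2 / 2))
            + (∑ i : Fin n, ∑ j : Fin n, (if i = j then 0 else
                -(W i j) * y i * y j))) := by
      rw [Dadd, Dadd]
      refine Finset.sum_congr rfl fun i _ => Finset.sum_congr rfl fun j _ => ?_
      by_cases h : i = j
      · simp [h]
      · simp only [h, if_false]
        rw [sq_expand i j]; ring
    rw [rhs1, ← swap1]
    have lhs1 : (∑ i : Fin n, ∑ j : Fin n, (if i = j then 0 else
          W i j * Real.exp (u j - u i) * y i ^ 2))
        = (∑ i : Fin n, ∑ j : Fin n, (if i = j then 0 else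
            W i j * Real.exp (u j - u i) * y i ^ 2 / 2))
          + (∑ i : Fin n, ∑ j : Fin n, (if i = j then 0 else
              W i j * Real.exp (u j - u i) * y i ^ 2 / 2)) := by
      rw [Dadd]
      refine Finset.sum_congr rfl fun i _ => Finset.sum_congr rfl fun j _ => ?_
      by_cases h : i = j
      · simp [h]
      · simp only [h, if_false]; ring
    rw [lhs1]
    ring
  rw [show (star x : Fin n → ℝ) = x from rfl, key x]
  -- nonnegativity of each summand
  have term_nn : ∀ i j : Fin n, (0:ℝ) ≤ (if i = j then 0 else
      W i j * (Real.exp ((u j - u i) / 2) * x i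
        - Real.exp ((u i - u j) / 2) * x j) ^ 2 / 2) := by
    intro i j
    by_cases h : i = j
    · simp [h]
    · simp only [h, if_false]
      have := hnn i j h
      positivity
  have sum_nn : (0:ℝ) ≤ ∑ i : Fin n, ∑ j : Fin n, (if i = j then 0 else
      W i j * (Real.exp ((u j - u i) / 2) * x i
        - Real.exp ((u i - u j) / 2) * x j) ^ 2 / 2) :=
    Finset.sum_nonneg fun i _ => Finset.sum_nonneg fun j _ => term_nn i j
  by_contra hle
  push_neg at hle
  have hq0 : 2 * γ * x i₀ ^ 2 = 0 ∧ (∑ i : Fin n, ∑ j : Fin n, (if i = j then 0 else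
      W i j * (Real.exp ((u j - u i) / 2) * x i
        - Real.exp ((u i - u j) / 2) * x j) ^ 2 / 2)) = 0 := by
    constructor <;> nlinarith [sq_nonneg (x i₀), sum_nn, hle]
  have hx0 : x i₀ = 0 := by
    have := hq0.1
    have h2 : x i₀ ^ 2 = 0 := by nlinarith
    exact pow_eq_zero_iff (n := 2) (by norm_num) |>.1 h2
  have hterm0 : ∀ i j : Fin n, (if i = j then (0:ℝ) else
      W i j * (Real.exp ((u j - u i) / 2) * x i
        - Real.exp ((u i - u j) / 2) * x j) ^ 2 / 2) = 0 := by
    intro i j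
    have h1 := (Finset.sum_eq_zero_iff_of_nonneg
      (fun i _ => Finset.sum_nonneg fun j _ => term_nn i j)).1 hq0.2 i (mem_univ i)
    exact (Finset.sum_eq_zero_iff_of_nonneg (fun j _ => term_nn i j)).1 h1 j (mem_univ j)
  have hedge : ∀ i j : Fin n, 0 < W i j → x i = 0 → x j = 0 := by
    intro i j hw hxi
    by_cases h : i = j
    · rwa [← h]
    · have h0 := hterm0 i j
      simp only [h, if_false] at h0
      have hsq : (Real.exp ((u j - u i) / 2) * x i
          - Real.exp ((u i - u j) / 2) * x j) ^ 2 = 0 := by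
        have h0' : W i j * (Real.exp ((u j - u i) / 2) * x i
            - Real.exp ((u i - u j) / 2) * x j) ^ 2 = 0 := by linarith
        rcases mul_eq_zero.1 h0' with h' | h'
        · exact absurd h' hw.ne'
        · exact h'
      have := pow_eq_zero_iff (n := 2) (by norm_num) |>.1 hsq
      rw [hxi, mul_zero, zero_sub, neg_eq_zero] at this
      rcases mul_eq_zero.1 this with h' | h'
      · exact absurd h' (Real.exp_ne_zero _)
      · exact h'
  have hall : ∀ j : Fin n, x j = 0 := by
    intro j
    induction hconn i₀ j with
    | refl => exact hx0
    | tail _ hbc ih => exact hedge _ _ hbc ih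
  exact hx (funext hall)
end

section
/- Suppose the graph 𝒢 = (V,E) with E = {{i,j} : W_{i,j} > 0} is connected, and fix i₀ ∈ V. Let 𝒟 = {β ∈ (0,∞)^V : 2β − P is positive definite}. Define Φ : 𝒟 → {u ∈ ℝ^V : u_{i₀} = 0} × (0,∞) by Φ(β) = ((u_j)_{j∈V}, γ), where e^{u_j} = G(i₀,j)/G(i₀,i₀) with G = (2β−P)^{−1}, and γ = 1/(2G(i₀,i₀)). Then Φ is a bijection, whose inverse maps (u, γ) to β given by β_i = Σ_{j∼i} (1/2) W_{i,j} e^{u_j − u_i} + 1_{{i=i₀}} γ. -/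
open MeasureTheory Real Finset

/-- The map `Φ : β ↦ ((u_j)_j, γ)` where `e^{u_j} = G(i₀,j)/G(i₀,i₀)` and `γ = 1/(2G(i₀,i₀))`. -/
noncomputable def Phi (n : ℕ) (W : Fin n → Fin n → ℝ) (i₀ : Fin n) (β : Fin n → ℝ) :
    (Fin n → ℝ) × ℝ :=
  ((fun j => Real.log ((Mmat n W β)⁻¹ i₀ j / (Mmat n W β)⁻¹ i₀ i₀)),
    1 / (2 * (Mmat n W β)⁻¹ i₀ i₀))

/-- The map `Ψ : (u, γ) ↦ β` given by `β_i = Σ_{j∼i} (1/2) W_{i,j} e^{u_j-u_i} + 1_{i=i₀} γ`. -/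
noncomputable def Psi (n : ℕ) (W : Fin n → Fin n → ℝ) (i₀ : Fin n)
    (p : (Fin n → ℝ) × ℝ) : Fin n → ℝ :=
  fun i => (∑ j ∈ Finset.univ.filter (fun j => j ≠ i ∧ 0 < W i j),
      (1 / 2) * W i j * Real.exp (p.1 j - p.1 i)) + (if i = i₀ then p.2 else 0)

section Aux

open Matrix

variable {n : ℕ} {W : Fin n → Fin n → ℝ} {β : Fin n → ℝ} {i₀ : Fin n}

lemma mmat_herm (hsym : ∀ i j, W i j = W j i) (β : Fin n → ℝ) :
    (Mmat n W β).IsHermitian := by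
  unfold Matrix.IsHermitian
  ext i j
  simp only [Matrix.conjTranspose_apply, Mmat, Matrix.of_apply, star_trivial]
  rcases eq_or_ne i j with h | h
  · simp [h]
  · simp [h, h.symm, hsym j i]

/-- The basic explicit mulVec formula. -/
lemma mmat_mulVec (β : Fin n → ℝ) (x : Fin n → ℝ) (i : Fin n) :
    (Mmat n W β *ᵥ x) i
      = 2 * β i * x i - ∑ j ∈ Finset.univ.erase i, W i j * x j := by
  have : (Mmat n W β *ᵥ x) i = ∑ j, Mmat n W β i j * x j := by
    simp [Matrix.mulVec, dotProduct]
  rw [this, ← Finset.add_sum_erase (Finset.univ) _ (Finset.mem_univ i)]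
  have h1 : Mmat n W β i i * x i = 2 * β i * x i := by simp [Mmat]
  rw [h1]
  have h2 : ∀ j ∈ Finset.univ.erase i, Mmat n W β i j * x j = -(W i j * x j) := by
    intro j hj
    have : i ≠ j := (Finset.ne_of_mem_erase hj).symm
    simp [Mmat, this]
  rw [Finset.sum_congr rfl h2, Finset.sum_neg_distrib]
  ring

lemma sum_extend (hnn : ∀ i j, i ≠ j → 0 ≤ W i j) (i : Fin n) (f : Fin n → ℝ) :
    ∑ j ∈ Finset.univ.filter (fun j => j ≠ i ∧ 0 < W i j), W i j * f j
      = ∑ j ∈ Finset.univ.erase i, W i j * f j := by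
  apply Finset.sum_subset
  · intro j hj
    simp only [Finset.mem_filter, Finset.mem_univ, true_and] at hj
    exact Finset.mem_erase.2 ⟨hj.1, Finset.mem_univ j⟩
  · intro j hj hj'
    have hji : j ≠ i := Finset.ne_of_mem_erase hj
    simp only [Finset.mem_filter, Finset.mem_univ, true_and, not_and] at hj'
    have hW : W i j = 0 := le_antisymm (not_lt.1 (hj' hji)) (hnn i j hji.symm)
    simp [hW]

end Aux

section Key

open Matrix

variable {n : ℕ} {W : Fin n → Fin n → ℝ} {i₀ : Fin n}

lemma mmat_inv_symm (hsym : ∀ i j, W i j = W j i) (β : Fin n → ℝ)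
    (hM : (Mmat n W β).PosDef) (i j : Fin n) :
    (Mmat n W β)⁻¹ i j = (Mmat n W β)⁻¹ j i := by
  have hT : (Mmat n W β)ᵀ = Mmat n W β := by
    have := mmat_herm hsym β
    simpa [Matrix.IsHermitian, Matrix.conjTranspose_eq_transpose_of_trivial] using this
  have : ((Mmat n W β)⁻¹)ᵀ = (Mmat n W β)⁻¹ := by
    rw [Matrix.transpose_nonsing_inv, hT]
  conv_lhs => rw [← this]
  rfl

lemma mmat_det_unit (β : Fin n → ℝ) (hM : (Mmat n W β).PosDef) :
    IsUnit (Mmat n W β).det :=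
  isUnit_iff_ne_zero.2 hM.det_pos.ne'

lemma mmat_mulVec_inv_row (hsym : ∀ i j, W i j = W j i) (β : Fin n → ℝ)
    (hM : (Mmat n W β).PosDef) :
    Mmat n W β *ᵥ (fun j => (Mmat n W β)⁻¹ i₀ j)
      = fun i => if i = i₀ then (1 : ℝ) else 0 := by
  funext i
  have h1 : (Mmat n W β *ᵥ (fun j => (Mmat n W β)⁻¹ i₀ j)) i
      = ∑ j, Mmat n W β i j * (Mmat n W β)⁻¹ j i₀ := by
    simp only [Matrix.mulVec, dotProduct]
    exact Finset.sum_congr rfl fun j _ => by rw [mmat_inv_symm hsym β hM i₀ j]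
  rw [h1]
  have h2 : ∑ j, Mmat n W β i j * (Mmat n W β)⁻¹ j i₀
      = (Mmat n W β * (Mmat n W β)⁻¹) i i₀ := (Matrix.mul_apply).symm
  rw [h2, Matrix.mul_nonsing_inv _ (mmat_det_unit β hM), Matrix.one_apply]

lemma inv_pos_row (hsym : ∀ i j, W i j = W j i) (hnn : ∀ i j, i ≠ j → 0 ≤ W i j)
    (hconn : ∀ i j : Fin n, Relation.ReflTransGen (fun a b => 0 < W a b) i j)
    (i₀ : Fin n) (β : Fin n → ℝ) (hM : (Mmat n W β).PosDef) :
    ∀ j, 0 < (Mmat n W β)⁻¹ i₀ j := by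
  set M := Mmat n W β with hMM
  set g : Fin n → ℝ := fun j => M⁻¹ i₀ j with hg
  have hMg : M *ᵥ g = fun i => if i = i₀ then (1 : ℝ) else 0 :=
    mmat_mulVec_inv_row hsym β hM
  -- componentwise equation
  have heq : ∀ i, 2 * β i * g i - ∑ j ∈ Finset.univ.erase i, W i j * g j
      = (if i = i₀ then (1 : ℝ) else 0) := by
    intro i
    have := congrFun hMg i
    rwa [mmat_mulVec] at this
  -- nonnegativity of g
  have hgnn : ∀ j, 0 ≤ g j := by
    set z : Fin n → ℝ := fun j => max (-g j) 0 with hz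
    set p : Fin n → ℝ := fun j => max (g j) 0 with hp
    have hgz : g = p - z := by
      funext j
      simp only [Pi.sub_apply, hz, hp]
      rcases le_total (g j) 0 with h | h
      · rw [max_eq_right h, max_eq_left (by linarith)]; ring
      · rw [max_eq_left h, max_eq_right (by linarith)]; ring
    have hznn : ∀ j, 0 ≤ z j := fun j => le_max_right _ _
    have hpnn : ∀ j, 0 ≤ p j := fun j => le_max_right _ _
    have hzp : ∀ j, z j * p j = 0 := by
      intro j
      rcases le_total (g j) 0 with h | h
      · simp only [hz, hp]; rw [max_eq_right h]; ring
      · simp only [hz, hp]; rw [max_eq_right (by linarith : -g j ≤ 0)]; ring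
    have hz0 : z = 0 := by
      by_contra hzne
      have hq : 0 < z ⬝ᵥ (M *ᵥ z) := by
        have := hM.dotProduct_mulVec_pos hzne
        simpa using this
      have hzmp : z ⬝ᵥ (M *ᵥ p) ≤ 0 := by
        rw [dotProduct]
        apply Finset.sum_nonpos
        intro i _
        have : (M *ᵥ p) i = ∑ j, M i j * p j := by
          simp [Matrix.mulVec, dotProduct]
        rw [this, Finset.mul_sum]
        apply Finset.sum_nonpos
        intro j _
        rcases eq_or_ne i j with h | h
        · subst h
          have : M i i = 2 * β i := by simp [hMM, Mmat]
          rw [this]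
          have h0 : z i * (2 * β i * p i) = 2 * β i * (z i * p i) := by ring
          rw [h0, hzp i, mul_zero]
        · have : M i j = -(W i j) := by simp [hMM, Mmat, h]
          rw [this]
          have hW : 0 ≤ W i j := hnn i j h
          have h0 : z i * (-W i j * p j) = -(W i j * z i * p j) := by ring
          rw [h0, neg_nonpos]
          exact mul_nonneg (mul_nonneg hW (hznn i)) (hpnn j)
      have hdot : z ⬝ᵥ (M *ᵥ g) = z i₀ := by
        rw [hMg, dotProduct]
        simp [mul_ite]
      have hsplit : z ⬝ᵥ (M *ᵥ g) = z ⬝ᵥ (M *ᵥ p) - z ⬝ᵥ (M *ᵥ z) := by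
        rw [hgz, Matrix.mulVec_sub, dotProduct_sub]
      have : z i₀ < 0 := by rw [← hdot, hsplit]; linarith
      exact absurd this (not_lt.2 (hznn i₀))
    intro j
    have hzj : z j = 0 := congrFun hz0 j
    have hle : -g j ≤ 0 := by
      rw [← hzj]
      exact le_max_left _ _
    linarith
  -- g i₀ > 0
  have hgne : g ≠ 0 := by
    intro h
    have := congrFun hMg i₀
    rw [h, Matrix.mulVec_zero] at this
    simp at this
  have hgi₀ : 0 < g i₀ := by
    have hpos := hM.dotProduct_mulVec_pos hgne
    have : g ⬝ᵥ (M *ᵥ g) = g i₀ := by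
      rw [hMg, dotProduct]
      simp [mul_ite]
    simpa [this] using hpos
  -- propagation of zeros
  have hprop : ∀ i, g i = 0 → ∀ j, 0 < W i j → g j = 0 := by
    intro i hi j hWij
    by_cases hji : j = i
    · rwa [hji]
    · have h1 := heq i
      rw [hi] at h1
      have h2 : ∑ k ∈ Finset.univ.erase i, W i k * g k = -(if i = i₀ then (1:ℝ) else 0) := by
        linarith [h1]
      have hnonneg : ∀ k ∈ Finset.univ.erase i, 0 ≤ W i k * g k := by
        intro k hk
        exact mul_nonneg (hnn i k (Finset.ne_of_mem_erase hk).symm) (hgnn k)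
      have hsum0 : ∑ k ∈ Finset.univ.erase i, W i k * g k = 0 := by
        have hle : ∑ k ∈ Finset.univ.erase i, W i k * g k ≤ 0 := by
          rw [h2]; split_ifs <;> norm_num
        exact le_antisymm hle (Finset.sum_nonneg hnonneg)
      have := (Finset.sum_eq_zero_iff_of_nonneg hnonneg).1 hsum0 j
        (Finset.mem_erase.2 ⟨hji, Finset.mem_univ j⟩)
      rcases mul_eq_zero.1 this with h | h
      · exact absurd h hWij.ne'
      · exact h
  intro j
  rcases (hgnn j).lt_or_eq with h | h
  · exact h
  · exfalso
    have key : ∀ b, Relation.ReflTransGen (fun a b => 0 < W a b) j b → g b = 0 := by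
    
      intro b hb
      induction hb with
      | refl => exact h.symm
      | tail _ hstep ih => exact hprop _ ih _ hstep
    exact absurd (key i₀ (hconn j i₀)) hgi₀.ne'

end Key

section Dir2

open Matrix

variable {n : ℕ} {W : Fin n → Fin n → ℝ} {i₀ : Fin n}

lemma exists_neighbor (hconn : ∀ i j : Fin n, Relation.ReflTransGen (fun a b => 0 < W a b) i j)
    (i : Fin n) (h : i ≠ i₀) : ∃ j, j ≠ i ∧ 0 < W i j := by
  have key : ∀ a : Fin n, Relation.ReflTransGen (fun a b => 0 < W a b) a i₀ →
      a = i₀ ∨ ∃ j, j ≠ a ∧ 0 < W a j := by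
    intro a ha
    induction ha using Relation.ReflTransGen.head_induction_on with
    | refl => exact Or.inl rfl
    | head hstep _ ih =>
      rename_i a' c _
      rcases eq_or_ne c a' with hca | hca
      · rcases ih with h1 | h1
        · subst hca; exact Or.inl h1
        · subst hca; exact Or.inr h1
      · exact Or.inr ⟨c, hca, hstep⟩
  rcases key i (hconn i i₀) with h1 | h1
  · exact absurd h1 h
  · exact h1

lemma psi_pos (hnn : ∀ i j, i ≠ j → 0 ≤ W i j)
    (hconn : ∀ i j : Fin n, Relation.ReflTransGen (fun a b => 0 < W a b) i j)
    (u : Fin n → ℝ) (γ : ℝ) (hγ : 0 < γ) (i : Fin n) : 0 < Psi n W i₀ (u, γ) i := by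
  unfold Psi
  simp only
  rcases eq_or_ne i i₀ with h | h
  · rw [if_pos h]
    have hs : 0 ≤ ∑ j ∈ Finset.univ.filter (fun j => j ≠ i ∧ 0 < W i j),
        (1 / 2) * W i j * Real.exp (u j - u i) := by
      apply Finset.sum_nonneg
      intro j hj
      simp only [Finset.mem_filter, Finset.mem_univ, true_and] at hj
      have := Real.exp_pos (u j - u i)
      nlinarith [hj.2]
    linarith
  · rw [if_neg h, add_zero]
    obtain ⟨j, hji, hWij⟩ := exists_neighbor hconn i h
    apply Finset.sum_pos
    · intro k hk
      simp only [Finset.mem_filter, Finset.mem_univ, true_and] at hk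
      have := Real.exp_pos (u k - u i)
      nlinarith [hk.2]
    · exact ⟨j, Finset.mem_filter.2 ⟨Finset.mem_univ j, hji, hWij⟩⟩

lemma psi_mulVec (hnn : ∀ i j, i ≠ j → 0 ≤ W i j)
    (u : Fin n → ℝ) (γ : ℝ) (hu : u i₀ = 0) :
    Mmat n W (Psi n W i₀ (u, γ)) *ᵥ (fun j => Real.exp (u j))
      = fun i => if i = i₀ then 2 * γ else 0 := by
  funext i
  rw [mmat_mulVec]
  have hβ : 2 * Psi n W i₀ (u, γ) i * Real.exp (u i)
      = (∑ j ∈ Finset.univ.filter (fun j => j ≠ i ∧ 0 < W i j), W i j * Real.exp (u j))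
        + (if i = i₀ then 2 * γ else 0) := by
    unfold Psi
    simp only
    have hstep : 2 * ((∑ j ∈ Finset.univ.filter (fun j => j ≠ i ∧ 0 < W i j),
        (1 / 2) * W i j * Real.exp (u j - u i)) + (if i = i₀ then γ else 0)) * Real.exp (u i)
        = (∑ j ∈ Finset.univ.filter (fun j => j ≠ i ∧ 0 < W i j),
            (1 / 2) * W i j * Real.exp (u j - u i) * (2 * Real.exp (u i)))
          + (if i = i₀ then γ else 0) * (2 * Real.exp (u i)) := by
      rw [← Finset.sum_mul]; ring
    rw [hstep]
    congr 1
    · apply Finset.sum_congr rfl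
      intro j _
      have : (1 / 2) * W i j * Real.exp (u j - u i) * (2 * Real.exp (u i))
          = W i j * (Real.exp (u j - u i) * Real.exp (u i)) := by ring
      rw [this, ← Real.exp_add]
      congr 2
      ring
    · split_ifs with hi
      · subst hi; rw [hu]; simp [Real.exp_zero]; ring
      · simp
  have hext : ∑ j ∈ Finset.univ.filter (fun j => j ≠ i ∧ 0 < W i j), W i j * Real.exp (u j)
      = ∑ j ∈ Finset.univ.erase i, W i j * Real.exp (u j) :=
    sum_extend hnn i _
  rw [hβ, hext]
  ring

end Dir2

section Dir2b

open Matrix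

variable {n : ℕ} {W : Fin n → Fin n → ℝ} {i₀ : Fin n}

lemma psi_posdef (hsym : ∀ i j, W i j = W j i) (hnn : ∀ i j, i ≠ j → 0 ≤ W i j)
    (hconn : ∀ i j : Fin n, Relation.ReflTransGen (fun a b => 0 < W a b) i j)
    (u : Fin n → ℝ) (γ : ℝ) (hu : u i₀ = 0) (hγ : 0 < γ) :
    (Mmat n W (Psi n W i₀ (u, γ))).PosDef := by
  set v : Fin n → ℝ := fun j => Real.exp (u j) with hv
  have hvpos : ∀ j, 0 < v j := fun j => Real.exp_pos _
  apply Matrix.PosDef.of_dotProduct_mulVec_pos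
  · exact mmat_herm hsym _
  · intro x hx
    have hQ : x ⬝ᵥ (Mmat n W (Psi n W i₀ (u, γ)) *ᵥ x)
        = (1/2) * (∑ i, ∑ j, (if i = j then 0 else
              W i j * (v j * x i - v i * x j)^2 / (v i * v j)))
          + 2 * γ * (x i₀)^2 := by
      set F : Fin n → Fin n → ℝ := fun i j =>
        if i = j then 0 else W i j * ((v j / v i) * (x i)^2 - x i * x j) with hF
      have stepa : x ⬝ᵥ (Mmat n W (Psi n W i₀ (u, γ)) *ᵥ x)
          = (∑ i, ∑ j, F i j) + 2 * γ * (x i₀)^2 := by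
        rw [dotProduct]
        have hrow : ∀ i, x i * (Mmat n W (Psi n W i₀ (u, γ)) *ᵥ x) i
            = (∑ j, F i j) + (if i = i₀ then 2 * γ * (x i)^2 else 0) := by
          intro i
          rw [mmat_mulVec]
          have hFsum : ∑ j, F i j = ∑ j ∈ Finset.univ.erase i, F i j := by
            rw [← Finset.add_sum_erase Finset.univ _ (Finset.mem_univ i)]
            simp [hF]
          have hFval : ∀ j ∈ Finset.univ.erase i,
              F i j = W i j * ((v j / v i) * (x i)^2 - x i * x j) := by
            intro j hj
            have : i ≠ j := (Finset.ne_of_mem_erase hj).symm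
            simp [hF, this]
          have hβ : 2 * Psi n W i₀ (u, γ) i * (x i)^2
              = (∑ j ∈ Finset.univ.erase i, W i j * ((v j / v i) * (x i)^2))
                + (if i = i₀ then 2 * γ * (x i)^2 else 0) := by
            unfold Psi
            simp only
            rw [← sum_extend hnn i (fun j => (v j / v i) * (x i)^2)]
            have hstep2 : 2 * ((∑ j ∈ Finset.univ.filter (fun j => j ≠ i ∧ 0 < W i j),
                (1 / 2) * W i j * Real.exp (u j - u i)) + (if i = i₀ then γ else 0)) * (x i)^2
                = (∑ j ∈ Finset.univ.filter (fun j => j ≠ i ∧ 0 < W i j),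
                    (1 / 2) * W i j * Real.exp (u j - u i) * (2 * (x i)^2))
                  + (if i = i₀ then γ else 0) * (2 * (x i)^2) := by
              rw [← Finset.sum_mul]; ring
            rw [hstep2]
            congr 1
            · apply Finset.sum_congr rfl
              intro j _
              rw [Real.exp_sub]
              show (1:ℝ)/2 * W i j * (v j / v i) * (2 * (x i)^2) = W i j * (v j / v i * (x i)^2)
              ring
            · split_ifs <;> ring
          rw [hFsum, Finset.sum_congr rfl hFval]
          have expand : x i * (2 * Psi n W i₀ (u, γ) i * x i
              - ∑ j ∈ Finset.univ.erase i, W i j * x j)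
              = 2 * Psi n W i₀ (u, γ) i * (x i)^2
                - ∑ j ∈ Finset.univ.erase i, W i j * (x i * x j) := by
            rw [mul_sub, Finset.mul_sum]
            congr 1
            · ring
            · apply Finset.sum_congr rfl; intro j _; ring
          rw [expand, hβ]
          have hsplit : ∑ j ∈ Finset.univ.erase i,
              W i j * ((v j / v i) * (x i)^2 - x i * x j)
                = (∑ j ∈ Finset.univ.erase i, W i j * ((v j / v i) * (x i)^2))
                  - ∑ j ∈ Finset.univ.erase i, W i j * (x i * x j) := by
            rw [← Finset.sum_sub_distrib]
            apply Finset.sum_congr rfl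
            intro j _; ring
          rw [hsplit]
          ring
        rw [Finset.sum_congr rfl (fun i _ => hrow i), Finset.sum_add_distrib]
        congr 1
        simp
      rw [stepa]
      congr 1
      have hcomm : ∑ i, ∑ j, F i j = ∑ i, ∑ j, F j i := Finset.sum_comm
      have h2 : (∑ i, ∑ j, F i j) = (1/2) * ∑ i, ∑ j, (F i j + F j i) := by
        have : ∑ i, ∑ j, (F i j + F j i)
            = (∑ i, ∑ j, F i j) + (∑ i, ∑ j, F j i) := by
          rw [← Finset.sum_add_distrib]
          apply Finset.sum_congr rfl
          intro i _
          rw [← Finset.sum_add_distrib]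
        rw [this, ← hcomm]
        ring
      rw [h2]
      congr 1
      apply Finset.sum_congr rfl
      intro i _
      apply Finset.sum_congr rfl
      intro j _
      rcases eq_or_ne i j with h | h
      · simp [hF, h]
      · simp only [hF, if_neg h, if_neg (Ne.symm h)]
        rw [hsym j i]
        have hvi := (hvpos i).ne'
        have hvj := (hvpos j).ne'
        field_simp
        ring
    -- nonnegativity and strictness
    have hGnn : ∀ i j : Fin n, 0 ≤ (if i = j then (0:ℝ) else
        W i j * (v j * x i - v i * x j)^2 / (v i * v j)) := by
      intro i j
      split_ifs with h
      · exact le_refl 0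
      · exact div_nonneg (mul_nonneg (hnn i j h) (sq_nonneg _))
          (mul_nonneg (hvpos i).le (hvpos j).le)
    have hsx : star x = x := star_trivial x
    rw [hsx, hQ]
    set S : ℝ := ∑ i, ∑ j, (if i = j then 0 else
        W i j * (v j * x i - v i * x j)^2 / (v i * v j)) with hS
    have hSnn : 0 ≤ S :=
      Finset.sum_nonneg fun i _ => Finset.sum_nonneg fun j _ => hGnn i j
    have hge : 0 ≤ (1/2) * S + 2 * γ * (x i₀)^2 := by nlinarith [sq_nonneg (x i₀)]
    rcases hge.lt_or_eq with hlt | heq0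
    · exact hlt
    · exfalso
      have hxi0 : x i₀ = 0 := by
        have h1 : 2 * γ * (x i₀)^2 = 0 := by nlinarith [sq_nonneg (x i₀)]
        have h2 : (x i₀)^2 = 0 := by
          rcases mul_eq_zero.1 h1 with h | h
          · exact absurd h (by positivity)
          · exact h
        exact pow_eq_zero_iff (two_ne_zero) |>.1 h2
      have hS0 : S = 0 := by nlinarith [sq_nonneg (x i₀)]
      have hterm : ∀ i j : Fin n, (if i = j then (0:ℝ) else
          W i j * (v j * x i - v i * x j)^2 / (v i * v j)) = 0 := by
        intro i j
        have h1 : ∑ j, (if i = j then (0:ℝ) else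
            W i j * (v j * x i - v i * x j)^2 / (v i * v j)) = 0 :=
          (Finset.sum_eq_zero_iff_of_nonneg
            (fun i _ => Finset.sum_nonneg fun j _ => hGnn i j)).1 hS0 i (Finset.mem_univ i)
        exact (Finset.sum_eq_zero_iff_of_nonneg (fun j _ => hGnn i j)).1 h1 j (Finset.mem_univ j)
      have hcross : ∀ i j : Fin n, 0 < W i j → v j * x i = v i * x j := by
        intro i j hW
        rcases eq_or_ne i j with h | h
        · subst h; rfl
        · have h0 := hterm i j
          rw [if_neg h] at h0
          have hden : v i * v j ≠ 0 := by positivity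
          rcases div_eq_zero_iff.1 h0 with h1 | h1
          · rcases mul_eq_zero.1 h1 with h2 | h2
            · exact absurd h2 hW.ne'
            · have := pow_eq_zero_iff (two_ne_zero) |>.1 h2
              linarith [sub_eq_zero.1 this]
          · exact absurd h1 hden
      have hall : ∀ k, x k = 0 := by
        intro k
        have hinv : ∀ b, Relation.ReflTransGen (fun a b => 0 < W a b) k b →
            v b * x k = v k * x b := by
          intro b hb
          induction hb with
          | refl => ring
          | tail _ hstep ih =>
            rename_i b c _
            have hbc := hcross b c hstep
            have hvb := (hvpos b).ne'
            apply mul_left_cancel₀ hvb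
            calc v b * (v c * x k) = v c * (v b * x k) := by ring
              _ = v c * (v k * x b) := by rw [ih]
              _ = v k * (v c * x b) := by ring
              _ = v k * (v b * x c) := by rw [hbc]
              _ = v b * (v k * x c) := by ring
        have h1 := hinv i₀ (hconn k i₀)
        rw [hxi0, mul_zero] at h1
        have := (hvpos i₀).ne'
        rcases mul_eq_zero.1 h1 with h2 | h2
        · exact absurd h2 this
        · exact h2
      exact hx (funext hall)

end Dir2b

open Matrix

theorem stmt10 (n : ℕ) (W : Fin n → Fin n → ℝ)
    (hsym : ∀ i j, W i j = W j i) (hnn : ∀ i j, i ≠ j → 0 ≤ W i j)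
    (hconn : ∀ i j : Fin n, Relation.ReflTransGen (fun a b => 0 < W a b) i j)
    (i₀ : Fin n) :
    (∀ β : Fin n → ℝ, (∀ i, 0 < β i) → (Mmat n W β).PosDef →
        ((Phi n W i₀ β).1 i₀ = 0 ∧ 0 < (Phi n W i₀ β).2 ∧
          Psi n W i₀ (Phi n W i₀ β) = β)) ∧
      ∀ (u : Fin n → ℝ) (γ : ℝ), u i₀ = 0 → 0 < γ →
        ((∀ i, 0 < Psi n W i₀ (u, γ) i) ∧ (Mmat n W (Psi n W i₀ (u, γ))).PosDef ∧
          Phi n W i₀ (Psi n W i₀ (u, γ)) = (u, γ)) := by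
  constructor
  · -- direction 1 : Ψ ∘ Φ = id
    intro β hβ hM
    set M := Mmat n W β with hMM
    set g : Fin n → ℝ := fun j => M⁻¹ i₀ j with hg
    have hgpos : ∀ j, 0 < g j := inv_pos_row hsym hnn hconn i₀ β hM
    have heq : ∀ i, 2 * β i * g i - ∑ j ∈ Finset.univ.erase i, W i j * g j
        = (if i = i₀ then (1 : ℝ) else 0) := by
      intro i
      have := congrFun (mmat_mulVec_inv_row hsym β hM (i₀ := i₀)) i
      rwa [mmat_mulVec] at this
    have h1 : (Phi n W i₀ β).1 i₀ = 0 := by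
      unfold Phi
      simp only
      rw [div_self (hgpos i₀).ne', Real.log_one]
    have h2 : 0 < (Phi n W i₀ β).2 := by
      unfold Phi
      simp only
      have := hgpos i₀
      positivity
    refine ⟨h1, h2, ?_⟩
    funext i
    have hterm : ∀ j, (1/2) * W i j * Real.exp ((Phi n W i₀ β).1 j - (Phi n W i₀ β).1 i)
        = W i j * g j / (2 * g i) := by
      intro j
      unfold Phi
      simp only
      rw [Real.exp_sub, Real.exp_log (div_pos (hgpos j) (hgpos i₀)),
        Real.exp_log (div_pos (hgpos i) (hgpos i₀))]
      have hgi := (hgpos i).ne'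
      have hg0 := (hgpos i₀).ne'
      field_simp
    unfold Psi
    rw [Finset.sum_congr rfl (fun j _ => hterm j), ← Finset.sum_div,
      sum_extend hnn i g]
    have hsum : ∑ j ∈ Finset.univ.erase i, W i j * g j
        = 2 * β i * g i - (if i = i₀ then (1:ℝ) else 0) := by
      have := heq i; linarith
    rw [hsum]
    have hgi := (hgpos i).ne'
    have hg0 := (hgpos i₀).ne'
    rcases eq_or_ne i i₀ with h | h
    · rw [if_pos h, if_pos h, h]
      show (2 * β i₀ * g i₀ - 1) / (2 * g i₀) + 1 / (2 * g i₀) = β i₀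
      rw [← add_div, sub_add_cancel]
      rw [mul_comm 2 (β i₀), mul_assoc, mul_div_assoc]
      rw [div_self (mul_pos two_pos (hgpos i₀)).ne']
      ring
    · rw [if_neg h, if_neg h]
      show (2 * β i * g i - 0) / (2 * g i) + 0 = β i
      field_simp
      ring
  · -- direction 2 : Φ ∘ Ψ = id
    intro u γ hu hγ
    have hPD := psi_posdef hsym hnn hconn u γ hu hγ
    refine ⟨psi_pos hnn hconn u γ hγ, hPD, ?_⟩
    set βΨ := Psi n W i₀ (u, γ) with hβΨ
    set M := Mmat n W βΨ with hMM
    set v : Fin n → ℝ := fun j => Real.exp (u j) with hv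
    have hv0 : v i₀ = 1 := by rw [hv]; simp [hu]
    have hdet := mmat_det_unit βΨ hPD
    have hMv : M *ᵥ v = fun i => if i = i₀ then 2 * γ else 0 :=
      psi_mulVec hnn u γ hu
    have hback : M⁻¹ *ᵥ (M *ᵥ v) = v := by
      rw [Matrix.mulVec_mulVec, Matrix.nonsing_inv_mul _ hdet, Matrix.one_mulVec]
    have hinv : ∀ j, M⁻¹ i₀ j = v j / (2 * γ) := by
      intro j
      have h1 := congrFun hback j
      rw [hMv] at h1
      have h2 : (M⁻¹ *ᵥ (fun i => if i = i₀ then 2 * γ else 0)) j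
          = M⁻¹ j i₀ * (2 * γ) := by
        simp [Matrix.mulVec, dotProduct, mul_ite]
      rw [h2] at h1
      rw [mmat_inv_symm hsym βΨ hPD i₀ j]
      rw [eq_div_iff (by positivity : (2:ℝ) * γ ≠ 0)]
      exact h1
    have hratio : ∀ j, M⁻¹ i₀ j / M⁻¹ i₀ i₀ = v j := by
      intro j
      rw [hinv j, hinv i₀, hv0]
      field_simp
    unfold Phi
    refine Prod.ext ?_ ?_
    · funext j
      simp only
      rw [hratio j]
      exact Real.log_exp (u j)
    · simp only
      rw [hinv i₀, hv0]
      field_simp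
end

section
/- Suppose the graph 𝒢 = (V,E) with E = {{i,j} : W_{i,j} > 0} is connected, fix i₀ ∈ V. Let u ∈ ℝ^V with u_{i₀} = 0, let γ > 0, and define β ∈ ℝ^V by β_i = Σ_{j∼i} (1/2) W_{i,j} e^{u_j − u_i} + 1_{{i=i₀}} γ. Then det(2β − P) = 2γ e^{−2Σ_{i∈V} u_i} D(W,u), where D(W,u) = Σ_T Π_{{i,j}∈T} W_{i,j} e^{u_i+u_j}, the sum running over all spanning trees T of 𝒢. -/
open MeasureTheory Real Finset

open Classical in
/-- `D(W,u) = Σ_T Π_{{i,j}∈T} W_{i,j} e^{u_i+u_j}`, the sum running over spanning trees of the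
graph with vertex set `Fin n` and edges the pairs `{i,j}` with `W i j > 0`; a spanning tree is
encoded as a set of ordered pairs `(i,j)` with `i < j`. -/
noncomputable def Dfun (n : ℕ) (W : Fin n → Fin n → ℝ) (u : Fin n → ℝ) : ℝ :=
  ∑ T ∈ Finset.univ.filter (fun T : Finset (Fin n × Fin n) =>
      (∀ p ∈ T, p.1 < p.2 ∧ 0 < W p.1 p.2) ∧ T.card = n - 1 ∧
      ∀ i j : Fin n, Relation.ReflTransGen (fun a b => (a, b) ∈ T ∨ (b, a) ∈ T) i j),
    ∏ p ∈ T, W p.1 p.2 * Real.exp (u p.1 + u p.2)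

/-- signed incidence of vertex `v` in ordered pair `p`. -/
def incm (R : Type*) [Ring R] {n : ℕ} (v : Fin n) (p : Fin n × Fin n) : R :=
  (if v = p.1 then 1 else 0) - (if v = p.2 then 1 else 0)

lemma flow {n : ℕ} (r : Fin n) (S : Finset (Fin n × Fin n)) (v : Fin n)
    (hv : Relation.ReflTransGen (fun a b => (a, b) ∈ S ∨ (b, a) ∈ S) v r) :
    ∃ g : ↥S → ℤ, ∀ x : Fin n,
      ∑ e : ↥S, incm ℤ x ↑e * g e =
        (if x = v then 1 else 0) - (if x = r then 1 else 0) := by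
  classical
  induction hv using Relation.ReflTransGen.head_induction_on with
  | refl => exact ⟨0, fun x => by simp⟩
  | head hab hbr ih =>
    rename_i a b
    obtain ⟨g, hg⟩ := ih
    rcases hab with h | h
    · refine ⟨fun e => g e + (if e = ⟨(a, b), h⟩ then 1 else 0), fun x => ?_⟩
      have : ∑ e : ↥S, incm ℤ x ↑e * (g e + (if e = ⟨(a, b), h⟩ then 1 else 0))
          = (∑ e : ↥S, incm ℤ x ↑e * g e) + incm ℤ x (a, b) := by
        simp only [mul_add, Finset.sum_add_distrib]
        congr 1
        simp [mul_ite]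
      rw [this, hg]
      simp only [incm]
      ring
    · refine ⟨fun e => g e - (if e = ⟨(b, a), h⟩ then 1 else 0), fun x => ?_⟩
      have : ∑ e : ↥S, incm ℤ x ↑e * (g e - (if e = ⟨(b, a), h⟩ then 1 else 0))
          = (∑ e : ↥S, incm ℤ x ↑e * g e) - incm ℤ x (b, a) := by
        simp only [mul_sub, Finset.sum_sub_distrib]
        congr 1
        simp [mul_ite]
      rw [this, hg]
      simp only [incm]
      ring

lemma detsq {n : ℕ} (r : Fin n) (S : Finset (Fin n × Fin n))
    (hconn : ∀ v, Relation.ReflTransGen (fun a b => (a, b) ∈ S ∨ (b, a) ∈ S) v r)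
    (eb : {x : Fin n // x ≠ r} ≃ ↥S) :
    (Matrix.of fun v w : {x : Fin n // x ≠ r} => incm ℝ (v : Fin n) ((eb w : Fin n × Fin n))).det ^ 2 = 1 := by
  classical
  set K : Matrix {x : Fin n // x ≠ r} {x : Fin n // x ≠ r} ℤ :=
    Matrix.of fun v w => incm ℤ (v : Fin n) ((eb w : Fin n × Fin n)) with hK
  -- real matrix is the cast of K
  have hcast : (Matrix.of fun v w : {x : Fin n // x ≠ r} => incm ℝ (v : Fin n) ((eb w : Fin n × Fin n)))
      = K.map (Int.cast : ℤ → ℝ) := by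
    ext v w
    simp [K, incm, Matrix.map, apply_ite (Int.cast : ℤ → ℝ)]
  have hmain : K.det = 1 ∨ K.det = -1 := by
    choose g hg using fun v : {x : Fin n // x ≠ r} => flow r S ↑v (hconn ↑v)
    set P : Matrix {x : Fin n // x ≠ r} {x : Fin n // x ≠ r} ℤ :=
      Matrix.of fun w v => g v (eb w) with hP
    have hKP : K * P = 1 := by
      ext v v'
      have : (K * P) v v' = ∑ e : ↥S, incm ℤ (v : Fin n) (e : Fin n × Fin n) * g v' e := by
        rw [Matrix.mul_apply]
        exact Equiv.sum_comp eb (fun e => incm ℤ (v : Fin n) (e : Fin n × Fin n) * g v' e)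
      rw [this, hg v' ↑v]
      have h1 : ((v : Fin n) = ↑v') ↔ v = v' := Subtype.coe_inj
      have h2 : ¬ ((v : Fin n) = r) := v.2
      rw [Matrix.one_apply]
      simp [h1, h2]
    have := congrArg Matrix.det hKP
    rw [Matrix.det_mul, Matrix.det_one] at this
    exact Int.isUnit_iff.mp (IsUnit.of_mul_eq_one _ this)
  have : (K.map (Int.cast : ℤ → ℝ)).det = ((K.det : ℤ) : ℝ) := by
    have h := RingHom.map_det (Int.castRingHom ℝ) K
    simpa [RingHom.mapMatrix_apply] using h.symm
  rw [hcast, this]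
  rcases hmain with h | h <;> rw [h] <;> norm_num

lemma detzero {n : ℕ} (r : Fin n) (S : Finset (Fin n × Fin n))
    (hnc : ¬ ∀ i j : Fin n, Relation.ReflTransGen
      (fun a b => (a, b) ∈ S ∨ (b, a) ∈ S) i j)
    (f : {x : Fin n // x ≠ r} → Fin n × Fin n) (hf : ∀ v, f v ∈ S) :
    (Matrix.of fun v v' : {x : Fin n // x ≠ r} =>
      incm ℝ (v' : Fin n) (f v)).det = 0 := by
  classical
  set rel : Fin n → Fin n → Prop := fun a b => (a, b) ∈ S ∨ (b, a) ∈ S with hrel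
  have hsymr : Symmetric (Relation.ReflTransGen rel) :=
    by
      haveI : Std.Symm rel := ⟨fun a b h => Or.symm h⟩
      exact fun a b h => Std.Symm.symm (r := Relation.ReflTransGen rel) a b h
  -- find a vertex not connected to r
  have hex : ∃ i : Fin n, ¬ Relation.ReflTransGen rel i r := by
    by_contra hall
    push_neg at hall
    apply hnc
    intro i j
    exact (hall i).trans (hsymr (hall j))
  obtain ⟨i₁, hi₁⟩ := hex
  have hi₁r : i₁ ≠ r := fun h => hi₁ (h ▸ Relation.ReflTransGen.refl)
  -- indicator vector of the component of i₁
  set y : Fin n → ℝ := fun a => if Relation.ReflTransGen rel i₁ a then 1 else 0 with hy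
  have hyr : y r = 0 := by simp [y, hi₁]
  set x : {v : Fin n // v ≠ r} → ℝ := fun v => y ↑v with hx
  rw [← Matrix.exists_mulVec_eq_zero_iff]
  refine ⟨x, ?_, ?_⟩
  · intro h0
    have := congrFun h0 ⟨i₁, hi₁r⟩
    simp [x, y, Relation.ReflTransGen.refl] at this
  · funext v
    have hmem : f v ∈ S := hf v
    have hstep : y (f v).1 = y (f v).2 := by
      have h12 : Relation.ReflTransGen rel i₁ (f v).1 ↔
          Relation.ReflTransGen rel i₁ (f v).2 := by
        constructor
        · intro h; exact h.tail (Or.inl (by simpa using hmem))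
        · intro h; exact h.tail (Or.inr (by simpa using hmem))
      simp only [y]
      by_cases h : Relation.ReflTransGen rel i₁ (f v).1
      · rw [if_pos h, if_pos (h12.mp h)]
      · rw [if_neg h, if_neg (fun h2 => h (h12.mpr h2))]
    have : (Matrix.of fun v v' : {x : Fin n // x ≠ r} =>
        incm ℝ (v' : Fin n) (f v)).mulVec x v
        = ∑ v' : {x : Fin n // x ≠ r}, incm ℝ (v' : Fin n) (f v) * y ↑v' := rfl
    rw [Pi.zero_apply, this]
    have hsub : ∑ v' : {x : Fin n // x ≠ r}, incm ℝ (v' : Fin n) (f v) * y ↑v'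
        = ∑ a ∈ Finset.univ.erase r, incm ℝ a (f v) * y a := by
      exact (Finset.sum_subtype (p := fun a => a ≠ r) (Finset.univ.erase r)
        (by intro x; simp [Finset.mem_erase]) (fun a => incm ℝ a (f v) * y a)).symm
    rw [hsub, Finset.sum_erase _ (by rw [hyr]; ring)]
    have : ∑ a : Fin n, incm ℝ a (f v) * y a = y (f v).1 - y (f v).2 := by
      simp only [incm, sub_mul, ite_mul, one_mul, zero_mul]
      rw [Finset.sum_sub_distrib]
      rw [Finset.sum_ite_eq' Finset.univ (f v).1 y, Finset.sum_ite_eq' Finset.univ (f v).2 y]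
      simp
    rw [this, hstep, sub_self]

lemma det_expand {n : ℕ} (r : Fin n) (c : Fin n × Fin n → ℝ) :
    (Matrix.of fun v v' : {x : Fin n // x ≠ r} =>
        ∑ p : Fin n × Fin n, c p * incm ℝ (v : Fin n) p * incm ℝ (v' : Fin n) p).det
      = ∑ f : {x : Fin n // x ≠ r} → Fin n × Fin n,
          (∏ v : {x : Fin n // x ≠ r}, (c (f v) * incm ℝ (v : Fin n) (f v))) *
            (Matrix.of fun v v' : {x : Fin n // x ≠ r} =>
              incm ℝ (v' : Fin n) (f v)).det := by
  classical
  have hrow : (Matrix.of fun v v' : {x : Fin n // x ≠ r} =>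
        ∑ p : Fin n × Fin n, c p * incm ℝ (v : Fin n) p * incm ℝ (v' : Fin n) p)
      = fun v : {x : Fin n // x ≠ r} => ∑ p : Fin n × Fin n,
          (c p * incm ℝ (v : Fin n) p) • (fun v' : {x : Fin n // x ≠ r} => incm ℝ (v' : Fin n) p) := by
    funext v v'
    rw [Finset.sum_apply]
    simp [mul_assoc]
  show (Matrix.detRowAlternating (Matrix.of fun v v' : {x : Fin n // x ≠ r} =>
        ∑ p : Fin n × Fin n, c p * incm ℝ (v : Fin n) p * incm ℝ (v' : Fin n) p)) = _
  rw [hrow]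
  have h := ((Matrix.detRowAlternating :
      ({x : Fin n // x ≠ r} → ℝ) [⋀^{x : Fin n // x ≠ r}]→ₗ[ℝ] ℝ).toMultilinearMap).map_sum
    (g := fun (v : {x : Fin n // x ≠ r}) (p : Fin n × Fin n) =>
      (c p * incm ℝ (↑v) p) • fun v' : {x : Fin n // x ≠ r} => incm ℝ (↑v') p)
  refine h.trans (Finset.sum_congr rfl fun f _ => ?_)
  rw [MultilinearMap.map_smul_univ]
  rfl

lemma fiber_eval {n : ℕ} (r : Fin n) (c : Fin n × Fin n → ℝ) (S : Finset (Fin n × Fin n))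
    (eb : {x : Fin n // x ≠ r} ≃ ↥S) :
    ∑ f ∈ Finset.univ.filter
        (fun f : {x : Fin n // x ≠ r} → Fin n × Fin n => Finset.univ.image f = S),
      (∏ v : {x : Fin n // x ≠ r}, (c (f v) * incm ℝ (v : Fin n) (f v))) *
        (Matrix.of fun v v' : {x : Fin n // x ≠ r} => incm ℝ (v' : Fin n) (f v)).det
    = (∏ p ∈ S, c p) *
        ((Matrix.of fun v w : {x : Fin n // x ≠ r} =>
          incm ℝ (v : Fin n) ((eb w : Fin n × Fin n))).det) ^ 2 := by
  classical
  set K : Matrix {x : Fin n // x ≠ r} {x : Fin n // x ≠ r} ℝ :=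
    Matrix.of fun v w => incm ℝ (v : Fin n) ((eb w : Fin n × Fin n)) with hKdef
  set Me : Matrix {x : Fin n // x ≠ r} {x : Fin n // x ≠ r} ℝ :=
    Matrix.of fun v v' => incm ℝ (v' : Fin n) ((eb v : Fin n × Fin n)) with hMedef
  have hMeK : Me.det = K.det := by
    rw [← Matrix.det_transpose K]
    congr 1
  have hstep : ∑ σ : Equiv.Perm {x : Fin n // x ≠ r},
      ((∏ v : {x : Fin n // x ≠ r}, (c ((eb (σ v) : Fin n × Fin n)) *
          incm ℝ (v : Fin n) ((eb (σ v) : Fin n × Fin n)))) *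
        (Matrix.of fun v v' : {x : Fin n // x ≠ r} =>
          incm ℝ (v' : Fin n) ((eb (σ v) : Fin n × Fin n))).det)
      = ∑ f ∈ Finset.univ.filter
        (fun f : {x : Fin n // x ≠ r} → Fin n × Fin n => Finset.univ.image f = S),
      (∏ v : {x : Fin n // x ≠ r}, (c (f v) * incm ℝ (v : Fin n) (f v))) *
        (Matrix.of fun v v' : {x : Fin n // x ≠ r} => incm ℝ (v' : Fin n) (f v)).det := by
    refine Finset.sum_nbij
      (i := fun σ : Equiv.Perm {x : Fin n // x ≠ r} =>
        (fun v => ((eb (σ v) : Fin n × Fin n)))) ?_ ?_ ?_ ?_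
    · -- maps into the fiber
      intro σ _
      rw [Finset.mem_filter]
      refine ⟨Finset.mem_univ _, ?_⟩
      ext p
      simp only [Finset.mem_image, Finset.mem_univ, true_and]
      constructor
      · rintro ⟨v, rfl⟩; exact (eb (σ v)).2
      · intro hp
        exact ⟨σ.symm (eb.symm ⟨p, hp⟩), by simp⟩
    · -- injective
      intro σ1 _ σ2 _ h
      have : ∀ v, σ1 v = σ2 v := by
        intro v
        have := congrFun h v
        exact eb.injective (Subtype.ext this)
      exact Equiv.ext this
    · -- surjective onto the fiber
      intro f hf
      rw [Finset.coe_filter] at hf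
      obtain ⟨-, hf'⟩ := hf
      have hmem : ∀ v, f v ∈ S := fun v => by
        rw [← hf']; exact Finset.mem_image_of_mem f (Finset.mem_univ v)
      have hinj : Function.Injective f := by
        have hcard : (Finset.univ.image f).card = (Finset.univ :
            Finset {x : Fin n // x ≠ r}).card := by
          rw [hf', ← Fintype.card_coe S, Fintype.card_congr eb.symm]
          rfl
        have h2 := Finset.card_image_iff.mp hcard
        intro a b hab
        exact h2 (by simp) (by simp) hab
      have hbij : Function.Bijective
          (fun v : {x : Fin n // x ≠ r} => eb.symm ⟨f v, hmem v⟩) := by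
        apply Finite.injective_iff_bijective.mp
        intro a b hab
        apply hinj
        have := eb.symm.injective hab
        exact congrArg Subtype.val (eb.symm.injective hab)
      refine ⟨Equiv.ofBijective _ hbij, by simp, ?_⟩
      funext v
      simp [Equiv.ofBijective_apply]
    · intro σ _; rfl
  rw [← hstep]
  have hterm : ∀ σ : Equiv.Perm {x : Fin n // x ≠ r},
      ((∏ v : {x : Fin n // x ≠ r}, (c ((eb (σ v) : Fin n × Fin n)) *
          incm ℝ (v : Fin n) ((eb (σ v) : Fin n × Fin n)))) *
        (Matrix.of fun v v' : {x : Fin n // x ≠ r} =>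
          incm ℝ (v' : Fin n) ((eb (σ v) : Fin n × Fin n))).det)
      = (∏ p ∈ S, c p) * Me.det *
          ((Equiv.Perm.sign σ : ℝ) * ∏ v, K v (σ v)) := by
    intro σ
    have h1 : (∏ v : {x : Fin n // x ≠ r}, (c ((eb (σ v) : Fin n × Fin n)) *
          incm ℝ (v : Fin n) ((eb (σ v) : Fin n × Fin n))))
        = (∏ p ∈ S, c p) * ∏ v, K v (σ v) := by
      rw [Finset.prod_mul_distrib]
      congr 1
      · rw [← Finset.prod_coe_sort S c]
        exact Equiv.prod_comp (σ.trans eb) (fun e : ↥S => c ↑e)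
    have h2 : (Matrix.of fun v v' : {x : Fin n // x ≠ r} =>
          incm ℝ (v' : Fin n) ((eb (σ v) : Fin n × Fin n))).det
        = (Equiv.Perm.sign σ : ℝ) * Me.det := by
      have : (Matrix.of fun v v' : {x : Fin n // x ≠ r} =>
          incm ℝ (v' : Fin n) ((eb (σ v) : Fin n × Fin n))) = Me.submatrix σ id := rfl
      rw [this, Matrix.det_permute]
    rw [h1, h2]
    ring
  rw [Finset.sum_congr rfl (fun σ _ => hterm σ), ← Finset.mul_sum]
  have hdet : ∑ σ : Equiv.Perm {x : Fin n // x ≠ r},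
      ((Equiv.Perm.sign σ : ℝ) * ∏ v, K v (σ v)) = K.transpose.det := by
    rw [Matrix.det_apply']
    refine Finset.sum_congr rfl fun σ _ => ?_
    congr 1
  rw [hdet, Matrix.det_transpose, hMeK]
  ring

lemma fiber_zero {n : ℕ} (r : Fin n) (c : Fin n × Fin n → ℝ)
    (P0 : Fin n × Fin n → Prop) (hc : ∀ p, ¬ P0 p → c p = 0)
    (S : Finset (Fin n × Fin n))
    (hS : ¬ ((∀ p ∈ S, P0 p) ∧ S.card = n - 1 ∧ ∀ i j : Fin n,
      Relation.ReflTransGen (fun a b => (a, b) ∈ S ∨ (b, a) ∈ S) i j)) :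
    ∑ f ∈ Finset.univ.filter
        (fun f : {x : Fin n // x ≠ r} → Fin n × Fin n => Finset.univ.image f = S),
      (∏ v : {x : Fin n // x ≠ r}, (c (f v) * incm ℝ (v : Fin n) (f v))) *
        (Matrix.of fun v v' : {x : Fin n // x ≠ r} => incm ℝ (v' : Fin n) (f v)).det
    = 0 := by
  classical
  refine Finset.sum_eq_zero fun f hf => ?_
  have hf' : Finset.univ.image f = S := (Finset.mem_filter.mp hf).2
  have hmem : ∀ v, f v ∈ S := fun v => by
    rw [← hf']; exact Finset.mem_image_of_mem f (Finset.mem_univ v)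
  by_cases hinj : Function.Injective f
  · have hcardV : Fintype.card {x : Fin n // x ≠ r} = n - 1 := by
      have := Fintype.card_subtype_compl (fun x : Fin n => x = r)
      simp only [Fintype.card_subtype_eq, Fintype.card_fin] at this
      convert this using 2
    have hcardS : S.card = n - 1 := by
      rw [← hf', Finset.card_image_of_injective _ hinj, Finset.card_univ, hcardV]
    by_cases hall : ∀ p ∈ S, P0 p
    · have hnc : ¬ ∀ i j : Fin n, Relation.ReflTransGen
          (fun a b => (a, b) ∈ S ∨ (b, a) ∈ S) i j := by tauto
      rw [detzero r S hnc f hmem, mul_zero]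
    · push_neg at hall
      obtain ⟨p, hp, hnp⟩ := hall
      obtain ⟨v₀, -, rfl⟩ := Finset.mem_image.mp (hf' ▸ hp)
      rw [Finset.prod_eq_zero (Finset.mem_univ v₀) (by rw [hc _ hnp, zero_mul]),
        zero_mul]
  · obtain ⟨a, b, hab, hne⟩ := Function.not_injective_iff.mp hinj
    have hrow : (Matrix.of fun v v' : {x : Fin n // x ≠ r} =>
        incm ℝ (v' : Fin n) (f v)) a = (Matrix.of fun v v' : {x : Fin n // x ≠ r} =>
        incm ℝ (v' : Fin n) (f v)) b := by
      funext v'; simp only [Matrix.of_apply, hab]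
    rw [Matrix.det_zero_of_row_eq hne hrow, mul_zero]

noncomputable def ccf {n : ℕ} (W : Fin n → Fin n → ℝ) (u : Fin n → ℝ)
    (p : Fin n × Fin n) : ℝ :=
  if p.1 < p.2 ∧ 0 < W p.1 p.2 then W p.1 p.2 * Real.exp (u p.1 + u p.2) else 0

section entries
variable {n : ℕ} (W : Fin n → Fin n → ℝ) (u : Fin n → ℝ)


lemma Lmat_offdiag (hsym : ∀ i j, W i j = W j i) (hnn : ∀ i j, i ≠ j → 0 ≤ W i j)
    {i j : Fin n} (hij : i ≠ j) :
    ∑ p : Fin n × Fin n, ccf W u p * incm ℝ i p * incm ℝ j p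
      = -(W i j * Real.exp (u i + u j)) := by
  classical
  have hpt : ∀ p : Fin n × Fin n, ccf W u p * incm ℝ i p * incm ℝ j p
      = (if p = (i, j) then -(ccf W u (i, j)) else 0) + (if p = (j, i) then -(ccf W u (j, i)) else 0) := by
    rintro ⟨a, b⟩
    by_cases h1 : (a, b) = (i, j)
    · obtain ⟨rfl, rfl⟩ := Prod.mk.injEq .. ▸ h1
      simp only [if_pos rfl, if_neg (by simp [Prod.ext_iff, hij, hij.symm] : ¬ ((a,b) = (b,a)))]
      simp [incm, hij, hij.symm]
    · by_cases h2 : (a, b) = (j, i)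
      · obtain ⟨rfl, rfl⟩ := Prod.mk.injEq .. ▸ h2
        simp only [if_neg h1, if_pos rfl]
        simp [incm, hij, hij.symm]
      · rw [if_neg h1, if_neg h2]
        -- i or j is not an endpoint
        simp only [Prod.ext_iff, not_and_or] at h1 h2
        have : incm ℝ i (a, b) = 0 ∨ incm ℝ j (a, b) = 0 := by
          by_cases hia : i = a <;> by_cases hib : i = b <;>
            by_cases hja : j = a <;> by_cases hjb : j = b <;>
            simp_all [incm] <;> tauto
        rcases this with h | h
        · rw [h, mul_zero, zero_mul, add_zero]
        · rw [h, mul_zero, add_zero]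
  rw [Finset.sum_congr rfl fun p _ => hpt p, Finset.sum_add_distrib,
    Finset.sum_ite_eq' Finset.univ ((i, j) : Fin n × Fin n)
      (fun _ => -(ccf W u (i, j))),
    Finset.sum_ite_eq' Finset.univ ((j, i) : Fin n × Fin n)
      (fun _ => -(ccf W u (j, i)))]
  simp only [Finset.mem_univ, if_pos]
  simp only [ccf]
  -- now case on order of i j and sign of W i j
  rcases lt_trichotomy i j with h | h | h
  · by_cases hw : 0 < W i j
    · rw [if_pos ⟨h, hw⟩, if_neg (by simp [not_lt.mpr h.le, h.not_gt] : ¬ ((j, i).1 < (j, i).2 ∧ 0 < W j i))]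
      ring
    · have : W i j = 0 := le_antisymm (not_lt.mp hw) (hnn i j hij)
      rw [if_neg (by simp [hw]), if_neg (by simp [not_lt.mpr h.le])]
      rw [this]; ring
  · exact absurd h hij
  · by_cases hw : 0 < W j i
    · rw [if_neg (by simp [not_lt.mpr h.le] :
          ¬ (((i, j) : Fin n × Fin n).1 < ((i, j) : Fin n × Fin n).2 ∧ 0 < W i j)),
        if_pos (show ((j, i) : Fin n × Fin n).1 < ((j, i) : Fin n × Fin n).2 ∧ 0 < W j i
          from ⟨h, hw⟩)]
      rw [hsym i j]; ring
    · have hz : W j i = 0 := le_antisymm (not_lt.mp hw) (hnn j i hij.symm)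
      rw [if_neg (by simp [not_lt.mpr h.le] :
          ¬ (((i, j) : Fin n × Fin n).1 < ((i, j) : Fin n × Fin n).2 ∧ 0 < W i j)),
        if_neg (by simp [hw] :
          ¬ (((j, i) : Fin n × Fin n).1 < ((j, i) : Fin n × Fin n).2 ∧ 0 < W j i))]
      rw [hsym i j, hz]; ring

end entries

lemma Lmat_diag {n : ℕ} (W : Fin n → Fin n → ℝ) (u : Fin n → ℝ)
    (hsym : ∀ i j, W i j = W j i) (i : Fin n) :
    ∑ p : Fin n × Fin n, ccf W u p * incm ℝ i p * incm ℝ i p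
      = ∑ j ∈ Finset.univ.filter (fun j => j ≠ i ∧ 0 < W i j),
          W i j * Real.exp (u i + u j) := by
  classical
  have hpt : ∀ p : Fin n × Fin n, ccf W u p * incm ℝ i p * incm ℝ i p
      = (if i = p.1 then ccf W u p else 0) + (if i = p.2 then ccf W u p else 0) := by
    rintro ⟨a, b⟩
    by_cases hab : (a : Fin n) < b ∧ 0 < W a b
    · have hne : a ≠ b := ne_of_lt hab.1
      by_cases hia : i = a <;> by_cases hib : i = b <;>
        simp_all [incm] <;> ring
    · have : ccf W u (a, b) = 0 := by simp [ccf, hab]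
      rw [this]; simp
  rw [Finset.sum_congr rfl fun p _ => hpt p, Finset.sum_add_distrib]
  have h1 : ∑ p : Fin n × Fin n, (if i = p.1 then ccf W u p else 0)
      = ∑ b : Fin n, ccf W u (i, b) := by
    rw [Fintype.sum_prod_type]
    rw [Finset.sum_eq_single i]
    · simp
    · intro a _ ha
      refine Finset.sum_eq_zero fun b _ => if_neg (fun h => ha h.symm)
    · intro h; exact absurd (Finset.mem_univ i) h
  have h2 : ∑ p : Fin n × Fin n, (if i = p.2 then ccf W u p else 0)
      = ∑ a : Fin n, ccf W u (a, i) := by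
    rw [Fintype.sum_prod_type_right]
    rw [Finset.sum_eq_single i]
    · simp
    · intro b _ hb
      refine Finset.sum_eq_zero fun a _ => if_neg (fun h => hb h.symm)
    · intro h; exact absurd (Finset.mem_univ i) h
  rw [h1, h2, ← Finset.sum_add_distrib]
  rw [Finset.sum_filter]
  refine Finset.sum_congr rfl fun j _ => ?_
  by_cases hj : j ≠ i ∧ 0 < W i j
  · rw [if_pos hj]
    obtain ⟨hne, hw⟩ := hj
    rcases lt_trichotomy i j with h | h | h
    · rw [show ccf W u (i, j) = W i j * Real.exp (u i + u j) from by
        simp [ccf, h, hw]]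
      rw [show ccf W u (j, i) = 0 from by simp [ccf, not_lt.mpr h.le]]
      ring
    · exact absurd h.symm hne
    · rw [show ccf W u (i, j) = 0 from by simp [ccf, not_lt.mpr h.le]]
      rw [show ccf W u (j, i) = W j i * Real.exp (u j + u i) from by
        simp [ccf, h, hsym i j ▸ hw]]
      rw [hsym j i]; ring
  · rw [if_neg hj]
    push_neg at hj
    by_cases hji : j = i
    · subst hji
      simp [ccf]
    · have hw : ¬ 0 < W i j := by
        intro hw; exact absurd hw (by simpa using hj hji)
      rw [show ccf W u (i, j) = 0 from by simp [ccf, hw]]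
      rw [show ccf W u (j, i) = 0 from by
        have h2 : ¬ 0 < W j i := by rw [hsym j i]; exact hw
        simp [ccf, h2]]
      ring

lemma det_add_corner {n : ℕ} (r : Fin n) (L : Matrix (Fin n) (Fin n) ℝ)
    (hL : L.det = 0) (t : ℝ) :
    (Matrix.of fun i j => L i j + if i = r ∧ j = r then t else 0).det
      = t * (L.submatrix (fun v : {x : Fin n // x ≠ r} => (v : Fin n))
          (fun v : {x : Fin n // x ≠ r} => (v : Fin n))).det := by
  classical
  have hN : (Matrix.of fun i j => L i j + if i = r ∧ j = r then t else 0)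
      = L.updateCol r ((fun i => L i r) + fun i => if i = r then t else 0) := by
    ext i j
    by_cases hj : j = r
    · subst hj
      rw [Matrix.updateCol_apply]
      simp
    · rw [Matrix.updateCol_apply, if_neg hj]
      simp [hj]
  rw [hN, Matrix.det_updateCol_add, Matrix.updateCol_eq_self, hL, zero_add]
  have hsmul : (fun i => if i = r then t else 0)
      = t • (fun i => if i = r then (1 : ℝ) else 0) := by
    funext i; simp [mul_ite]
  rw [hsmul, Matrix.det_updateCol_smul]
  congr 1
  -- now expand along the column r
  set A := L.updateCol r (fun i => if i = r then (1 : ℝ) else 0) with hA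
  let q : Unit ⊕ {x : Fin n // x ≠ r} ≃ Fin n :=
    { toFun := Sum.elim (fun _ => r) (fun v => ↑v)
      invFun := fun x => if h : x = r then Sum.inl () else Sum.inr ⟨x, h⟩
      left_inv := by
        rintro (⟨⟩ | v)
        · simp
        · simp [dif_neg v.2]
      right_inv := by
        intro x
        by_cases h : x = r
        · simp [h]
        · simp [dif_neg h] }
  rw [← Matrix.det_submatrix_equiv_self q A]
  have hblock : A.submatrix q q = Matrix.fromBlocks
      (Matrix.of fun _ _ : Unit => (1 : ℝ))
      (Matrix.of fun (_ : Unit) (j : {x : Fin n // x ≠ r}) => L r ↑j)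
      0
      (L.submatrix (fun v : {x : Fin n // x ≠ r} => (v : Fin n))
        (fun v : {x : Fin n // x ≠ r} => (v : Fin n))) := by
    ext i j
    rcases i with i | i <;> rcases j with j | j
    · simp [A, q, Matrix.updateCol_apply]
    · simp [A, q, Matrix.updateCol_apply, j.2]
    · simp [A, q, Matrix.updateCol_apply, i.2]
    · simp [A, q, Matrix.updateCol_apply, j.2]
  rw [hblock, Matrix.det_fromBlocks_zero₂₁]
  have hone : (Matrix.of fun _ _ : Unit => (1 : ℝ)).det = 1 := by
    rw [Matrix.det_unique]; rfl
  rw [hone, one_mul]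

lemma detL_zero {n : ℕ} (W : Fin n → Fin n → ℝ) (u : Fin n → ℝ) (r : Fin n) :
    (Matrix.of fun i j : Fin n =>
      ∑ p : Fin n × Fin n, ccf W u p * incm ℝ i p * incm ℝ j p).det = 0 := by
  classical
  rw [← Matrix.exists_mulVec_eq_zero_iff]
  refine ⟨fun _ => 1, fun h => one_ne_zero (congrFun h r), ?_⟩
  funext i
  show (∑ j : Fin n, (∑ p : Fin n × Fin n, ccf W u p * incm ℝ i p * incm ℝ j p) * 1) = 0
  simp only [mul_one]
  rw [Finset.sum_comm]
  refine Finset.sum_eq_zero fun p _ => ?_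
  have h0 : ∑ j : Fin n, incm ℝ j p = 0 := by
    simp only [incm, Finset.sum_sub_distrib]
    rw [Finset.sum_ite_eq' Finset.univ p.1 (fun _ => (1 : ℝ)),
      Finset.sum_ite_eq' Finset.univ p.2 (fun _ => (1 : ℝ))]
    simp
  calc ∑ j : Fin n, ccf W u p * incm ℝ i p * incm ℝ j p
      = ccf W u p * incm ℝ i p * ∑ j : Fin n, incm ℝ j p := by rw [Finset.mul_sum]
    _ = 0 := by rw [h0, mul_zero]

lemma detLhat {n : ℕ} (r : Fin n) (W : Fin n → Fin n → ℝ) (u : Fin n → ℝ) :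
    (Matrix.of fun v v' : {x : Fin n // x ≠ r} =>
        ∑ p : Fin n × Fin n,
          ccf W u p * incm ℝ (v : Fin n) p * incm ℝ (v' : Fin n) p).det
      = Dfun n W u := by
  classical
  set c : Fin n × Fin n → ℝ := ccf W u with hc
  set P0 : Fin n × Fin n → Prop := fun p => p.1 < p.2 ∧ 0 < W p.1 p.2 with hP0
  set cond : Finset (Fin n × Fin n) → Prop := fun S =>
    (∀ p ∈ S, P0 p) ∧ S.card = n - 1 ∧ ∀ i j : Fin n,
      Relation.ReflTransGen (fun a b => (a, b) ∈ S ∨ (b, a) ∈ S) i j with hcond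
  rw [det_expand r c]
  -- group by image
  have hfib := Finset.sum_fiberwise_of_maps_to
    (s := (Finset.univ : Finset ({x : Fin n // x ≠ r} → Fin n × Fin n)))
    (g := fun f : {x : Fin n // x ≠ r} → Fin n × Fin n => Finset.univ.image f)
    (t := (Finset.univ : Finset (Finset (Fin n × Fin n))))
    (fun f _ => Finset.mem_univ _)
    (fun f => (∏ v : {x : Fin n // x ≠ r}, (c (f v) * incm ℝ (v : Fin n) (f v))) *
        (Matrix.of fun v v' : {x : Fin n // x ≠ r} => incm ℝ (v' : Fin n) (f v)).det)
  rw [← hfib]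
  rw [← Finset.sum_filter_add_sum_filter_not Finset.univ cond]
  have hzero : ∑ S ∈ Finset.univ.filter (fun S => ¬ cond S),
      (∑ f ∈ Finset.univ.filter
        (fun f : {x : Fin n // x ≠ r} → Fin n × Fin n => Finset.univ.image f = S),
      (∏ v : {x : Fin n // x ≠ r}, (c (f v) * incm ℝ (v : Fin n) (f v))) *
        (Matrix.of fun v v' : {x : Fin n // x ≠ r} => incm ℝ (v' : Fin n) (f v)).det) = 0 := by
    refine Finset.sum_eq_zero fun S hS => ?_
    have hnS : ¬ cond S := (Finset.mem_filter.mp hS).2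
    exact fiber_zero r c P0
      (fun p hp => by rw [hc]; simp only [ccf]; exact if_neg hp) S hnS
  rw [hzero, add_zero]
  have hcardV : Fintype.card {x : Fin n // x ≠ r} = n - 1 := by
    have := Fintype.card_subtype_compl (fun x : Fin n => x = r)
    simp only [Fintype.card_subtype_eq, Fintype.card_fin] at this
    convert this using 2
  have hmain : ∀ S ∈ Finset.univ.filter cond,
      (∑ f ∈ Finset.univ.filter
        (fun f : {x : Fin n // x ≠ r} → Fin n × Fin n => Finset.univ.image f = S),
      (∏ v : {x : Fin n // x ≠ r}, (c (f v) * incm ℝ (v : Fin n) (f v))) *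
        (Matrix.of fun v v' : {x : Fin n // x ≠ r} => incm ℝ (v' : Fin n) (f v)).det)
      = ∏ p ∈ S, W p.1 p.2 * Real.exp (u p.1 + u p.2) := by
    intro S hS
    have hcS : cond S := (Finset.mem_filter.mp hS).2
    obtain ⟨hval, hcard, hconn⟩ := hcS
    have hcards : Fintype.card {x : Fin n // x ≠ r} = Fintype.card ↥S := by
      rw [hcardV, Fintype.card_coe, hcard]
    have eb : {x : Fin n // x ≠ r} ≃ ↥S := Fintype.equivOfCardEq hcards
    rw [fiber_eval r c S eb, detsq r S (fun v => hconn v r) eb, mul_one]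
    exact Finset.prod_congr rfl fun p hp => by
      rw [hc]; simp only [ccf]; exact if_pos (hval p hp)
  rw [Finset.sum_congr rfl hmain]
  rw [Dfun]

theorem stmt14 (n : ℕ) (W : Fin n → Fin n → ℝ)
    (hsym : ∀ i j, W i j = W j i) (hnn : ∀ i j, i ≠ j → 0 ≤ W i j)
    (hconn : ∀ i j : Fin n, Relation.ReflTransGen (fun a b => 0 < W a b) i j)
    (i₀ : Fin n) (u : Fin n → ℝ) (hu : u i₀ = 0) (γ : ℝ) (hγ : 0 < γ)
    (β : Fin n → ℝ)
    (hβ : ∀ i, β i = (∑ j ∈ Finset.univ.filter (fun j => j ≠ i ∧ 0 < W i j),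
        (1 / 2) * W i j * Real.exp (u j - u i)) + (if i = i₀ then γ else 0)) :
    (Mmat n W β).det = 2 * γ * Real.exp (-2 * ∑ i, u i) * Dfun n W u := by
  classical
  set L : Matrix (Fin n) (Fin n) ℝ := Matrix.of fun i j =>
    ∑ p : Fin n × Fin n, ccf W u p * incm ℝ i p * incm ℝ j p with hL
  set N : Matrix (Fin n) (Fin n) ℝ := Matrix.of fun i j =>
    L i j + if i = i₀ ∧ j = i₀ then 2 * γ else 0 with hN
  set D : Matrix (Fin n) (Fin n) ℝ := Matrix.diagonal fun i => Real.exp (-u i) with hD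
  have key : ∀ (a b x : ℝ),
      Real.exp (-a) * (x * Real.exp (a + b)) * Real.exp (-b) = x := by
    intro a b x
    have h1 : Real.exp (-a) * Real.exp (a + b) * Real.exp (-b) = 1 := by
      rw [← Real.exp_add, ← Real.exp_add, show -a + (a + b) + -b = 0 by ring,
        Real.exp_zero]
    calc Real.exp (-a) * (x * Real.exp (a + b)) * Real.exp (-b)
        = x * (Real.exp (-a) * Real.exp (a + b) * Real.exp (-b)) := by ring
      _ = x := by rw [h1, mul_one]
  have key2 : ∀ (a b x : ℝ),
      Real.exp (-a) * (x * Real.exp (a + b)) * Real.exp (-a) = x * Real.exp (b - a) := by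
    intro a b x
    have h1 : Real.exp (-a) * Real.exp (a + b) * Real.exp (-a) = Real.exp (b - a) := by
      rw [← Real.exp_add, ← Real.exp_add]
      congr 1
      ring
    calc Real.exp (-a) * (x * Real.exp (a + b)) * Real.exp (-a)
        = x * (Real.exp (-a) * Real.exp (a + b) * Real.exp (-a)) := by ring
      _ = x * Real.exp (b - a) := by rw [h1]
  have hM : Mmat n W β = D * N * D := by
    ext i j
    rw [Matrix.mul_diagonal, Matrix.diagonal_mul]
    simp only [Mmat, Matrix.of_apply]
    by_cases hij : i = j
    · subst hij
      rw [if_pos rfl]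
      have hNii : N i i = (∑ j ∈ Finset.univ.filter (fun j => j ≠ i ∧ 0 < W i j),
          W i j * Real.exp (u i + u j)) + (if i = i₀ then 2 * γ else 0) := by
        simp only [N, Matrix.of_apply, hL]
        rw [Lmat_diag W u hsym i]
        congr 1
        by_cases h : i = i₀ <;> simp [h]
      rw [hNii, hβ i]
      have hsum : 2 * ∑ j ∈ Finset.univ.filter (fun j => j ≠ i ∧ 0 < W i j),
            (1 / 2) * W i j * Real.exp (u j - u i)
          = (Real.exp (-u i) * ∑ j ∈ Finset.univ.filter (fun j => j ≠ i ∧ 0 < W i j),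
              W i j * Real.exp (u i + u j)) * Real.exp (-u i) := by
        rw [Finset.mul_sum, Finset.mul_sum, Finset.sum_mul]
        refine Finset.sum_congr rfl fun j hj => ?_
        rw [key2 (u i) (u j) (W i j)]
        ring
      have hite : 2 * (if i = i₀ then γ else 0)
          = (Real.exp (-u i) * if i = i₀ then 2 * γ else 0) * Real.exp (-u i) := by
        by_cases h : i = i₀
        · subst h
          rw [if_pos rfl, if_pos rfl, hu, neg_zero, Real.exp_zero]
          ring
        · rw [if_neg h, if_neg h]
          ring
      calc 2 * ((∑ j ∈ Finset.univ.filter (fun j => j ≠ i ∧ 0 < W i j),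
              (1 / 2) * W i j * Real.exp (u j - u i)) + (if i = i₀ then γ else 0))
          = 2 * (∑ j ∈ Finset.univ.filter (fun j => j ≠ i ∧ 0 < W i j),
              (1 / 2) * W i j * Real.exp (u j - u i)) + 2 * (if i = i₀ then γ else 0) := by
            ring
        _ = (Real.exp (-u i) * ∑ j ∈ Finset.univ.filter (fun j => j ≠ i ∧ 0 < W i j),
              W i j * Real.exp (u i + u j)) * Real.exp (-u i)
            + (Real.exp (-u i) * if i = i₀ then 2 * γ else 0) * Real.exp (-u i) := by
            rw [hsum, hite]
        _ = (Real.exp (-u i) * ((∑ j ∈ Finset.univ.filter (fun j => j ≠ i ∧ 0 < W i j),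
              W i j * Real.exp (u i + u j)) + (if i = i₀ then 2 * γ else 0)))
                * Real.exp (-u i) := by
            ring
    · rw [if_neg hij]
      have hNij : N i j = -(W i j * Real.exp (u i + u j)) := by
        simp only [N, Matrix.of_apply, hL]
        rw [Lmat_offdiag W u hsym hnn hij]
        rw [if_neg (fun h => hij (h.1.trans h.2.symm)), add_zero]
      rw [hNij]
      have hfin : Real.exp (-u i) * -(W i j * Real.exp (u i + u j)) * Real.exp (-u j)
          = -(W i j) := by
        calc Real.exp (-u i) * -(W i j * Real.exp (u i + u j)) * Real.exp (-u j)
            = Real.exp (-u i) * (-(W i j) * Real.exp (u i + u j)) * Real.exp (-u j) := by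
              ring
          _ = -(W i j) := key (u i) (u j) (-(W i j))
      rw [hfin]
  have hdetD : D.det = Real.exp (∑ i, -u i) := by
    rw [hD, Matrix.det_diagonal, Real.exp_sum]
  have hdetN : N.det = 2 * γ * Dfun n W u := by
    have h1 := det_add_corner i₀ L (detL_zero W u i₀) (2 * γ)
    have h2 : (L.submatrix (fun v : {x : Fin n // x ≠ i₀} => (v : Fin n))
        (fun v : {x : Fin n // x ≠ i₀} => (v : Fin n)))
        = Matrix.of fun v v' : {x : Fin n // x ≠ i₀} =>
          ∑ p : Fin n × Fin n,
            ccf W u p * incm ℝ (v : Fin n) p * incm ℝ (v' : Fin n) p := rfl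
    rw [hN, h1, h2, detLhat i₀ W u]
  rw [hM, Matrix.det_mul, Matrix.det_mul, hdetD, hdetN]
  have hexp : Real.exp (∑ i, -u i) * Real.exp (∑ i, -u i)
      = Real.exp (-2 * ∑ i, u i) := by
    rw [← Real.exp_add]
    congr 1
    rw [Finset.sum_neg_distrib]
    ring
  calc Real.exp (∑ i, -u i) * (2 * γ * Dfun n W u) * Real.exp (∑ i, -u i)
      = (Real.exp (∑ i, -u i) * Real.exp (∑ i, -u i)) * (2 * γ * Dfun n W u) := by
        ring
    _ = 2 * γ * Real.exp (-2 * ∑ i, u i) * Dfun n W u := by rw [hexp]; ring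
end

section
/- Suppose the graph 𝒢 = (V,E) with E = {{i,j} : W_{i,j} > 0} is connected, fix i₀ ∈ V. For u ∈ ℝ^V with u_{i₀} = 0 and γ > 0, let J be the V×V matrix with entries J_{i,j} = δ_{i,i₀} if j = i₀; J_{i,j} = (1/2)W_{i,j}e^{u_j−u_i} if i ≠ j and j ≠ i₀; and J_{i,i} = −β_i for i ≠ i₀, where β_i = Σ_{k∼i} (1/2) W_{i,k} e^{u_k − u_i}. Then det J = ± 2^{−(|V|−1)} e^{−2Σ_{i∈V} u_i} D(W,u) (in absolute value, |det J| = 2^{−(|V|−1)} e^{−2Σ_i u_i} D(W,u)), where D(W,u) = Σ_T Π_{{i,j}∈T} W_{i,j} e^{u_i+u_j}, the sum over all spanning trees T of 𝒢. -/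
open MeasureTheory Real Finset

lemma det_one_sub_nilpotent {m : Type*} [Fintype m] [DecidableEq m]
    (P : Matrix m m ℝ) (h : IsNilpotent P) : (1 - P).det = 1 := by
  have hu := Matrix.isUnit_charpolyRev_of_isNilpotent h
  obtain ⟨r, hr, hP⟩ := Polynomial.isUnit_iff.mp hu
  have h0 : Polynomial.eval 0 (Matrix.charpolyRev P) = 1 := Matrix.eval_charpolyRev
  rw [← hP, Polynomial.eval_C] at h0
  subst h0
  have h1 : Polynomial.eval 1 (Matrix.charpolyRev P) = 1 := by
    rw [← hP]; simp
  rw [Matrix.charpolyRev, Polynomial.eval, ← Polynomial.coe_eval₂RingHom,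
    RingHom.map_det] at h1
  convert h1 using 2
  ext i j
  by_cases hij : i = j <;>
    simp [Matrix.map_apply, Matrix.sub_apply, Matrix.smul_apply, Matrix.one_apply, hij]


section Iter
variable {α : Type*} [Fintype α] [DecidableEq α] (F : α → α) (t : α)

lemma reach_bound (hFt : F t = t) {x : α} (h : ∃ k, F^[k] x = t) :
    F^[Fintype.card α] x = t := by
  classical
  have hks : F^[Nat.find h] x = t := Nat.find_spec h
  set k := Nat.find h with hk
  have hkle : k ≤ Fintype.card α := by
    by_contra hlt
    push_neg at hlt
    have hinj : Set.InjOn (fun j => F^[j] x) (Finset.range k) := by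
      intro a ha b hb hab
      change F^[a] x = F^[b] x at hab
      simp only [Finset.coe_range, Set.mem_Iio] at ha hb
      by_contra hne
      rcases Ne.lt_or_gt hne with hlt' | hlt'
      · have : F^[k - (b - a)] x = t := by
          have h1 : F^[k] x = F^[k - b] (F^[b] x) := by
            rw [← Function.iterate_add_apply]
            congr 1; omega
          rw [← hab, ← Function.iterate_add_apply] at h1
          have : k - b + a = k - (b - a) := by omega
          rw [this] at h1
          rw [← h1]; exact hks
        exact Nat.find_min h (by omega) this
      · have : F^[k - (a - b)] x = t := by
          have h1 : F^[k] x = F^[k - a] (F^[a] x) := by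
            rw [← Function.iterate_add_apply]
            congr 1; omega
          rw [hab, ← Function.iterate_add_apply] at h1
          have : k - a + b = k - (a - b) := by omega
          rw [this] at h1
          rw [← h1]; exact hks
        exact Nat.find_min h (by omega) this
    have := Finset.card_le_card_of_injOn (fun j => F^[j] x)
      (fun _ _ => Finset.mem_univ _) hinj
    simp only [Finset.card_range, Finset.card_univ] at this
    omega
  have : F^[Fintype.card α] x = F^[Fintype.card α - k] (F^[k] x) := by
    rw [← Function.iterate_add_apply]; congr 1; omega
  rw [this, hks, Function.iterate_fixed hFt]

lemma exists_cycle (hFt : F t = t) {x : α} (h : F^[Fintype.card α] x ≠ t) :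
    ∃ y p, 0 < p ∧ F^[p] y = y ∧ ∀ j, F^[j] y ≠ t := by
  classical
  have hall : ∀ k, F^[k] x ≠ t := fun k hk => h (reach_bound F t hFt ⟨k, hk⟩)
  obtain ⟨a, ha, b, hb, hne, hab'⟩ := Finset.exists_ne_map_eq_of_card_lt_of_maps_to
    (s := Finset.range (Fintype.card α + 1)) (t := Finset.univ)
    (by simp) (f := fun j => F^[j] x) (fun _ _ => Finset.mem_univ _)
  have hab : F^[a] x = F^[b] x := hab'
  have hmm : F^[min a b] x = F^[max a b] x := by
    rcases le_total a b with hle | hle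
    · rw [min_eq_left hle, max_eq_right hle]; exact hab
    · rw [min_eq_right hle, max_eq_left hle]; exact hab.symm
  refine ⟨F^[min a b] x, max a b - min a b, by omega, ?_, ?_⟩
  · rw [← Function.iterate_add_apply]
    have : max a b - min a b + min a b = max a b := by omega
    rw [this, ← hmm]
  · intro j
    rw [← Function.iterate_add_apply]
    exact hall _

end Iter


section Reach
variable {α : Type*}

def ReachIn (R : α → α → Prop) (t : α) : ℕ → α → Prop
  | 0, x => x = t
  | (k+1), x => x = t ∨ ∃ y, R x y ∧ ReachIn R t k y

lemma reachIn_of_reflTransGen {R : α → α → Prop} {t x : α}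
    (h : Relation.ReflTransGen R x t) : ∃ k, ReachIn R t k x := by
  induction h using Relation.ReflTransGen.head_induction_on with
  | refl => exact ⟨0, rfl⟩
  | head h h' ih =>
    obtain ⟨k, hk⟩ := ih
    exact ⟨k + 1, Or.inr ⟨_, h, hk⟩⟩

open Classical in
noncomputable def ddist (R : α → α → Prop) (t : α) (x : α) : ℕ :=
  if h : ∃ k, ReachIn R t k x then Nat.find h else 0

lemma exists_parent (R : α → α → Prop) (t x : α) (hx : x ≠ t)
    (h : ∃ k, ReachIn R t k x) :
    ∃ y, R x y ∧ (∃ k, ReachIn R t k y) ∧ ddist R t y < ddist R t x := by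
  classical
  have hfind : ReachIn R t (Nat.find h) x := Nat.find_spec h
  rcases hk : Nat.find h with _ | k'
  · rw [hk] at hfind
    exact absurd hfind hx
  · rw [hk] at hfind
    rcases hfind with h0 | ⟨y, hxy, hy⟩
    · exact absurd h0 hx
    · refine ⟨y, hxy, ⟨k', hy⟩, ?_⟩
      have h1 : ddist R t y ≤ k' := by
        rw [ddist, dif_pos ⟨k', hy⟩]
        exact Nat.find_min' _ hy
      have h2 : ddist R t x = k' + 1 := by
        rw [ddist, dif_pos h, hk]
      omega

open Classical in
noncomputable def parent (R : α → α → Prop) (t : α) (x : α) : α :=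
  if h : x ≠ t ∧ ∃ k, ReachIn R t k x then Classical.choose (exists_parent R t x h.1 h.2)
  else t

lemma parent_spec {R : α → α → Prop} {t x : α} (hx : x ≠ t)
    (h : ∃ k, ReachIn R t k x) :
    R x (parent R t x) ∧ (∃ k, ReachIn R t k (parent R t x)) ∧
      ddist R t (parent R t x) < ddist R t x := by
  have hh : x ≠ t ∧ ∃ k, ReachIn R t k x := ⟨hx, h⟩
  rw [parent, dif_pos hh]
  exact Classical.choose_spec (exists_parent R t x hh.1 hh.2)

lemma parent_fixed (R : α → α → Prop) (t : α) : parent R t t = t := by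
  rw [parent, dif_neg]
  simp

lemma parent_reaches (R : α → α → Prop) (t : α)
    (hall : ∀ x, ∃ k, ReachIn R t k x) (x : α) :
    ∃ m, (parent R t)^[m] x = t := by
  suffices h : ∀ d x, ddist R t x = d → ∃ m, (parent R t)^[m] x = t from h _ x rfl
  intro d
  induction d using Nat.strong_induction_on with
  | _ d ih =>
    intro x hdx
    by_cases hx : x = t
    · exact ⟨0, hx⟩
    · obtain ⟨hR, hreach, hlt⟩ := parent_spec hx (hall x)
      obtain ⟨m, hm⟩ := ih (ddist R t (parent R t x)) (hdx ▸ hlt) _ rfl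
      exact ⟨m + 1, by rw [Function.iterate_succ_apply]; exact hm⟩

end Reach

section Core2
variable {n : ℕ} {i₀ : Fin n}


def Ffun (i₀ : Fin n) (f : {i : Fin n // i ≠ i₀} → Fin n) : Fin n → Fin n :=
  fun x => if h : x = i₀ then i₀ else f ⟨x, h⟩
lemma Ffun_fixed (f : {i : Fin n // i ≠ i₀} → Fin n) : Ffun i₀ f i₀ = i₀ := dif_pos rfl
lemma Ffun_apply (f : {i : Fin n // i ≠ i₀} → Fin n) (i : {i : Fin n // i ≠ i₀}) :
    Ffun i₀ f ↑i = f i := dif_neg i.2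
def AcyclicF (i₀ : Fin n) (f : {i : Fin n // i ≠ i₀} → Fin n) : Prop :=
  ∀ x, (Ffun i₀ f)^[n] x = i₀

def pear (a b : Fin n) : Fin n × Fin n := if a < b then (a, b) else (b, a)

lemma pear_cases (a b : Fin n) : pear a b = (a, b) ∨ pear a b = (b, a) := by
  rw [pear]; split_ifs <;> simp

lemma pear_eq (a b c d : Fin n) (h : pear a b = pear c d) :
    (a = c ∧ b = d) ∨ (a = d ∧ b = c) := by
  rw [pear, pear] at h
  split_ifs at h <;> rw [Prod.mk.injEq] at h <;> tauto

def edgesOf (i₀ : Fin n) (f : {i : Fin n // i ≠ i₀} → Fin n) : Finset (Fin n × Fin n) :=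
  Finset.univ.image (fun i : {i : Fin n // i ≠ i₀} => pear ↑i (f i))

lemma card_Vp : Fintype.card {i : Fin n // i ≠ i₀} = n - 1 := by
  have h := Fintype.card_subtype_compl (p := fun i : Fin n => i = i₀)
  rw [Fintype.card_subtype_eq, Fintype.card_fin] at h
  exact h

lemma acyclic_ne {f : {i : Fin n // i ≠ i₀} → Fin n} (hac : AcyclicF i₀ f)
    (i : {i : Fin n // i ≠ i₀}) : f i ≠ ↑i := by
  intro h
  have hfix : Ffun i₀ f ↑i = ↑i := by rw [Ffun_apply]; exact h
  have := Function.iterate_fixed hfix n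
  rw [hac ↑i] at this
  exact i.2 this.symm

lemma acyclic_no2 {f : {i : Fin n // i ≠ i₀} → Fin n} (hac : AcyclicF i₀ f)
    (i j : {i : Fin n // i ≠ i₀}) (h1 : f i = ↑j) (h2 : f j = ↑i) : False := by
  have key : ∀ m, (Ffun i₀ f)^[m] ↑i = ↑i ∨ (Ffun i₀ f)^[m] ↑i = ↑j := by
    intro m
    induction m with
    | zero => exact Or.inl rfl
    | succ m ih =>
      rw [Function.iterate_succ_apply']
      rcases ih with h | h
      · rw [h, Ffun_apply, h1]; exact Or.inr rfl
      · rw [h, Ffun_apply, h2]; exact Or.inl rfl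
  rcases key n with h | h <;> rw [hac ↑i] at h
  · exact i.2 h.symm
  · exact j.2 h.symm

lemma edges_inj {f : {i : Fin n // i ≠ i₀} → Fin n} (hac : AcyclicF i₀ f) :
    Function.Injective (fun i : {i : Fin n // i ≠ i₀} => pear ↑i (f i)) := by
  intro i j h
  rcases pear_eq _ _ _ _ h with ⟨h1, h2⟩ | ⟨h1, h2⟩
  · exact Subtype.ext h1
  · exact absurd h2 (fun h2 => acyclic_no2 hac i j h2 h1.symm)

lemma card_edges {f : {i : Fin n // i ≠ i₀} → Fin n} (hac : AcyclicF i₀ f) :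
    (edgesOf i₀ f).card = n - 1 := by
  rw [edgesOf, Finset.card_image_of_injective _ (edges_inj hac), Finset.card_univ, card_Vp]

lemma edges_conn {f : {i : Fin n // i ≠ i₀} → Fin n} (hac : AcyclicF i₀ f)
    (a b : Fin n) :
    Relation.ReflTransGen
      (fun a b => (a, b) ∈ edgesOf i₀ f ∨ (b, a) ∈ edgesOf i₀ f) a b := by
  set R : Fin n → Fin n → Prop :=
    fun a b => (a, b) ∈ edgesOf i₀ f ∨ (b, a) ∈ edgesOf i₀ f with hR
  have hreach : ∀ x, Relation.ReflTransGen R x i₀ := by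
    have key : ∀ (k) (x : Fin n), (Ffun i₀ f)^[k] x = i₀ → Relation.ReflTransGen R x i₀ := by
      intro k
      induction k with
      | zero => intro x hx; rw [Function.iterate_zero_apply] at hx; rw [hx]
      | succ k ih =>
        intro x hx
        by_cases hxi : x = i₀
        · rw [hxi]
        · have hmem : pear x (f ⟨x, hxi⟩) ∈ edgesOf i₀ f :=
            Finset.mem_image.mpr ⟨⟨x, hxi⟩, Finset.mem_univ _, rfl⟩
          have hstep : R x (f ⟨x, hxi⟩) := by
            rcases pear_cases x (f ⟨x, hxi⟩) with hc | hc
            · exact Or.inl (hc ▸ hmem)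
            · exact Or.inr (hc ▸ hmem)
          rw [Function.iterate_succ_apply] at hx
          have hFx : Ffun i₀ f x = f ⟨x, hxi⟩ := dif_neg hxi
          rw [hFx] at hx
          exact Relation.ReflTransGen.head hstep (ih _ hx)
    intro x
    exact key n x (hac x)
  have hsymm : Symmetric R := fun x y hxy => hxy.elim Or.inr Or.inl
  exact (hreach a).trans (@Std.Symm.symm _ _ (@Relation.ReflTransGen.stdSymm _ R ⟨fun a b h => hsymm h⟩) _ _ (hreach b))

lemma acyclic_unique {f f' : {i : Fin n // i ≠ i₀} → Fin n}
    (hf : AcyclicF i₀ f) (hf' : AcyclicF i₀ f')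
    (hE : edgesOf i₀ f = edgesOf i₀ f') : f = f' := by
  by_contra hne
  obtain ⟨i1, hi1⟩ := Function.ne_iff.mp hne
  have step : ∀ i : {i : Fin n // i ≠ i₀}, f i ≠ f' i →
      ∃ j : {i : Fin n // i ≠ i₀}, (↑j : Fin n) = f i ∧ f j ≠ f' j := by
    intro i hi
    have hmem : pear ↑i (f i) ∈ edgesOf i₀ f' := by
      rw [← hE]
      exact Finset.mem_image.mpr ⟨i, Finset.mem_univ _, rfl⟩
    obtain ⟨j, _, hj⟩ := Finset.mem_image.mp hmem
    rcases pear_eq _ _ _ _ hj with ⟨h1, h2⟩ | ⟨h1, h2⟩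
    · have hji : j = i := Subtype.ext h1
      rw [hji] at h2
      exact absurd h2.symm hi
    · refine ⟨j, h1, ?_⟩
      intro hjj
      exact acyclic_no2 hf i j h1.symm (hjj.trans h2)
  have iter : ∀ m, ∃ i : {i : Fin n // i ≠ i₀},
      (Ffun i₀ f)^[m] ↑i1 = ↑i ∧ f i ≠ f' i := by
    intro m
    induction m with
    | zero => exact ⟨i1, rfl, hi1⟩
    | succ m ih =>
      obtain ⟨i, hiter, hDi⟩ := ih
      obtain ⟨j, hj1, hj2⟩ := step i hDi
      refine ⟨j, ?_, hj2⟩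
      rw [Function.iterate_succ_apply', hiter, Ffun_apply, ← hj1]
  obtain ⟨i, hiter, _⟩ := iter n
  exact i.2 (by rw [← hiter, hf ↑i1])


instance (f : {i : Fin n // i ≠ i₀} → Fin n) : Decidable (AcyclicF i₀ f) :=
  inferInstanceAs (Decidable (∀ x, _ = _))

noncomputable def Rmat (i₀ : Fin n) (f : {i : Fin n // i ≠ i₀} → Fin n) :
    Matrix {i : Fin n // i ≠ i₀} {i : Fin n // i ≠ i₀} ℝ :=
  Matrix.of fun i j => (if i = j then (1:ℝ) else 0) - (if f i = ↑j then 1 else 0)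

lemma det_Rmat (f : {i : Fin n // i ≠ i₀} → Fin n) :
    (Rmat i₀ f).det = if AcyclicF i₀ f then 1 else 0 := by
  classical
  by_cases hac : AcyclicF i₀ f
  · rw [if_pos hac]
    set P : Matrix {i : Fin n // i ≠ i₀} {i : Fin n // i ≠ i₀} ℝ :=
      Matrix.of fun i j => if f i = ↑j then (1:ℝ) else 0 with hP
    have hpow : ∀ k (i j : {i : Fin n // i ≠ i₀}),
        (P ^ k) i j = if (Ffun i₀ f)^[k] ↑i = ↑j then 1 else 0 := by
      intro k
      induction k with
      | zero =>
        intro i j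
        simp only [pow_zero, Matrix.one_apply, Function.iterate_zero_apply,
          Subtype.coe_inj]
      | succ k ih =>
        intro i j
        rw [pow_succ]
        rw [Matrix.mul_apply]
        by_cases h : (Ffun i₀ f)^[k] ↑i = i₀
        · have hz : ∀ l : {i : Fin n // i ≠ i₀}, (P ^ k) i l * P l j = 0 := by
            intro l
            rw [ih i l, if_neg (by rw [h]; exact fun hh => l.2 hh.symm), zero_mul]
          rw [Finset.sum_eq_zero fun l _ => hz l]
          rw [Function.iterate_succ_apply', h, Ffun_fixed f,
            if_neg (fun hh => j.2 hh.symm)]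
        · set l₀ : {i : Fin n // i ≠ i₀} := ⟨(Ffun i₀ f)^[k] ↑i, h⟩ with hl₀
          rw [Finset.sum_eq_single l₀]
          · rw [ih i l₀, if_pos rfl, one_mul, hP]
            simp only [Matrix.of_apply]
            rw [Function.iterate_succ_apply']
            have : Ffun i₀ f ((Ffun i₀ f)^[k] ↑i) = f l₀ := Ffun_apply f l₀
            rw [this]
          · intro l _ hl
            rw [ih i l, if_neg (fun hh => hl (Subtype.ext hh.symm)), zero_mul]
          · intro hh
            exact absurd (Finset.mem_univ l₀) hh
    have hnil : IsNilpotent P := by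
      refine ⟨n, ?_⟩
      ext i j
      rw [hpow n i j, if_neg (by rw [hac ↑i]; exact fun hh => j.2 hh.symm)]
      simp
    have hR : Rmat i₀ f = 1 - P := by
      ext i j
      simp [Rmat, hP, Matrix.sub_apply, Matrix.one_apply]
    rw [hR]
    exact det_one_sub_nilpotent P hnil
  · rw [if_neg hac]
    obtain ⟨x, hx⟩ := not_forall.mp hac
    have hx' : (Ffun i₀ f)^[Fintype.card (Fin n)] x ≠ i₀ := by
      rwa [Fintype.card_fin]
    obtain ⟨y, p, hp, hcyc, hne⟩ := exists_cycle (Ffun i₀ f) i₀ (Ffun_fixed f) hx'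
    set F := Ffun i₀ f with hF
    set C : Finset (Fin n) := (Finset.range p).image (fun j => F^[j] y) with hC
    have hyC : y ∈ C := Finset.mem_image.mpr ⟨0, Finset.mem_range.mpr hp, rfl⟩
    have hmapsto : ∀ z ∈ C, F z ∈ C := by
      intro z hz
      obtain ⟨j, hj, rfl⟩ := Finset.mem_image.mp hz
      rw [Finset.mem_range] at hj
      rcases lt_or_eq_of_le (Nat.succ_le_of_lt hj) with hj1 | hj1
      · exact Finset.mem_image.mpr ⟨j + 1, Finset.mem_range.mpr hj1,
          Function.iterate_succ_apply' F j y⟩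
      · have : F (F^[j] y) = y := by
          rw [← Function.iterate_succ_apply' F j y, hj1, hcyc]
        rw [this]; exact hyC
    have hfix : ∀ z ∈ C, F^[p] z = z := by
      intro z hz
      obtain ⟨j, hj, rfl⟩ := Finset.mem_image.mp hz
      rw [← Function.iterate_add_apply, add_comm, Function.iterate_add_apply, hcyc]
    have hinjC : Set.InjOn F C := by
      intro z hz w hw hzw
      have h1 : F^[p] z = z := hfix z hz
      have h2 : F^[p] w = w := hfix w hw
      have hp1 : p = (p - 1) + 1 := by omega
      rw [hp1, Function.iterate_succ_apply] at h1 h2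
      rw [← h1, ← h2, hzw]
    have himg : C.image F = C := by
      apply Finset.eq_of_subset_of_card_le
      · intro z hz
        obtain ⟨w, hw, rfl⟩ := Finset.mem_image.mp hz
        exact hmapsto w hw
      · rw [Finset.card_image_of_injOn hinjC]
    apply Matrix.exists_vecMul_eq_zero_iff.mp
    refine ⟨(fun i => if ↑i ∈ C then 1 else 0 : {i : Fin n // i ≠ i₀} → ℝ), ?_, ?_⟩
    · have hy0 : y ≠ i₀ := by
        have := hne 0
        rwa [Function.iterate_zero_apply] at this
      intro h0
      have := congrFun h0 ⟨y, hy0⟩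
      simp only [Pi.zero_apply] at this
      rw [if_pos hyC] at this
      norm_num at this
    · funext j
      rw [Matrix.vecMul, dotProduct]
      simp only [Rmat, Matrix.of_apply, Matrix.transpose_apply]
      have hexp : ∀ i : {i : Fin n // i ≠ i₀},
          (if ↑i ∈ C then (1:ℝ) else 0) * ((if i = j then (1:ℝ) else 0) - (if f i = ↑j then 1 else 0))
          = (if ↑i ∈ C then (1:ℝ) else 0) * (if i = j then (1:ℝ) else 0)
            - (if ↑i ∈ C then (1:ℝ) else 0) * (if f i = ↑j then 1 else 0) := by
        intro i; ring
      rw [Finset.sum_congr rfl (fun i _ => hexp i), Finset.sum_sub_distrib]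
      have h1 : ∑ i : {i : Fin n // i ≠ i₀},
          (if ↑i ∈ C then (1:ℝ) else 0) * (if i = j then (1:ℝ) else 0)
          = if ↑j ∈ C then 1 else 0 := by
        rw [Finset.sum_eq_single j]
        · rw [if_pos rfl, mul_one]
        · intro l _ hl; rw [if_neg hl, mul_zero]
        · intro hh; exact absurd (Finset.mem_univ j) hh
      have h2 : ∑ i : {i : Fin n // i ≠ i₀},
          (if ↑i ∈ C then (1:ℝ) else 0) * (if f i = ↑j then 1 else 0)
          = if ↑j ∈ C then 1 else 0 := by
        have hsub : ∑ i : {i : Fin n // i ≠ i₀},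
            (if ↑i ∈ C then (1:ℝ) else 0) * (if f i = ↑j then 1 else 0)
            = ∑ x ∈ Finset.univ.filter (fun x : Fin n => x ≠ i₀),
              (if x ∈ C then (1:ℝ) else 0) * (if F x = ↑j then 1 else 0) := by
          have hstep : ∀ i : {i : Fin n // i ≠ i₀},
              (if ↑i ∈ C then (1:ℝ) else 0) * (if f i = ↑j then 1 else 0)
              = (fun x : Fin n =>
                  (if x ∈ C then (1:ℝ) else 0) * (if F x = ↑j then 1 else 0)) ↑i := by
            intro i
            simp only []
            rw [hF, Ffun_apply f i]
          rw [Finset.sum_congr rfl (fun i _ => hstep i),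
            ← Finset.sum_subtype (p := fun x : Fin n => x ≠ i₀)
              (Finset.univ.filter (fun x : Fin n => x ≠ i₀)) (fun x => by simp)
              (fun x => (if x ∈ C then (1:ℝ) else 0) * (if F x = ↑j then 1 else 0))]
        rw [hsub]
        rw [Finset.sum_filter_of_ne (by
          intro x _ hx0
          intro hxi
          apply hx0
          rw [hxi]
          have : i₀ ∉ C := by
            intro hiC
            obtain ⟨jj, _, hjj⟩ := Finset.mem_image.mp hiC
            exact hne jj hjj
          rw [if_neg this, zero_mul])]
        have : ∀ x : Fin n, (if x ∈ C then (1:ℝ) else 0) * (if F x = ↑j then 1 else 0)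
            = if x ∈ C then (if F x = ↑j then (1:ℝ) else 0) else 0 := by
          intro x
          by_cases hx : x ∈ C <;> simp [hx]
        rw [Finset.sum_congr rfl (fun x _ => this x), Finset.sum_ite_mem,
          Finset.univ_inter]
        by_cases hjC : (↑j : Fin n) ∈ C
        · rw [if_pos hjC]
          rw [← himg] at hjC
          obtain ⟨z, hzC, hz⟩ := Finset.mem_image.mp hjC
          rw [Finset.sum_eq_single_of_mem z hzC]
          · rw [if_pos hz]
          · intro w hw hwz
            rw [if_neg (fun hh => hwz (hinjC hw hzC (hh.trans hz.symm)))]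
        · rw [if_neg hjC]
          apply Finset.sum_eq_zero
          intro w hw
          rw [if_neg (fun hh => hjC (by rw [← hh]; exact hmapsto w hw))]
      rw [h1, h2, sub_self]
      rfl

lemma det_L (A : Fin n → Fin n → ℝ) (hA : ∀ i, A i i = 0) :
    (Matrix.of fun i j : {i : Fin n // i ≠ i₀} =>
      if i = j then ∑ k, A ↑i k else -A ↑i ↑j).det
    = ∑ f ∈ Finset.univ.filter (fun f : {i : Fin n // i ≠ i₀} → Fin n => AcyclicF i₀ f),
        ∏ i : {i : Fin n // i ≠ i₀}, A ↑i (f i) := by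
  classical
  set r : {i : Fin n // i ≠ i₀} → Fin n → ({i : Fin n // i ≠ i₀} → ℝ) :=
    fun i k => fun j => (if i = j then (1:ℝ) else 0) - (if k = ↑j then 1 else 0) with hr
  have hrow : (Matrix.of fun i j : {i : Fin n // i ≠ i₀} =>
      if i = j then ∑ k, A ↑i k else -A ↑i ↑j)
      = fun i : {i : Fin n // i ≠ i₀} => ∑ k : Fin n, A ↑i k • r i k := by
    funext i j
    simp only [Matrix.of_apply, Finset.sum_apply, Pi.smul_apply, hr, smul_eq_mul]
    have : ∀ k : Fin n, A ↑i k * ((if i = j then (1:ℝ) else 0) - (if k = ↑j then 1 else 0))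
        = A ↑i k * (if i = j then (1:ℝ) else 0) - (if k = ↑j then A ↑i k else 0) := by
      intro k
      by_cases hk : k = (↑j : Fin n) <;> by_cases hij : i = j <;> simp [hk, hij] <;> ring
    rw [Finset.sum_congr rfl (fun k _ => this k), Finset.sum_sub_distrib,
      Finset.sum_ite_eq' Finset.univ (↑j : Fin n) (fun k => A ↑i k)]
    simp only [Finset.mem_univ, if_true]
    by_cases hij : i = j
    · subst hij
      simp [hA ↑i]
    · rw [if_neg hij]
      simp [hij]
  rw [hrow]
  have hdet := (Matrix.detRowAlternating (R := ℝ)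
      (n := {i : Fin n // i ≠ i₀})).toMultilinearMap.map_sum
      (g := fun (i : {i : Fin n // i ≠ i₀}) (k : Fin n) => A ↑i k • r i k)
  refine Eq.trans hdet ?_
  have hterm : ∀ f : {i : Fin n // i ≠ i₀} → Fin n,
      Matrix.detRowAlternating (fun i : {i : Fin n // i ≠ i₀} => A ↑i (f i) • r i (f i))
      = (∏ i : {i : Fin n // i ≠ i₀}, A ↑i (f i)) * (if AcyclicF i₀ f then 1 else 0) := by
    intro f
    have hs := MultilinearMap.map_smul_univ
      ((Matrix.detRowAlternating (R := ℝ) (n := {i : Fin n // i ≠ i₀})).toMultilinearMap)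
      (fun i : {i : Fin n // i ≠ i₀} => A ↑i (f i))
      (fun i : {i : Fin n // i ≠ i₀} => r i (f i))
    refine Eq.trans hs ?_
    show (∏ i : {i : Fin n // i ≠ i₀}, A ↑i (f i)) • (Rmat i₀ f).det = _
    rw [smul_eq_mul, det_Rmat]
  refine Eq.trans (Finset.sum_congr rfl (fun f _ => hterm f)) ?_
  rw [Finset.sum_filter]
  apply Finset.sum_congr rfl
  intro f _
  by_cases hf : AcyclicF i₀ f <;> simp [hf]


lemma pear_mem_of_rel {T : Finset (Fin n × Fin n)} (hT : ∀ p ∈ T, p.1 < p.2)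
    {a b : Fin n} (h : (a, b) ∈ T ∨ (b, a) ∈ T) : pear a b ∈ T := by
  rcases h with h | h
  · rw [pear, if_pos (hT _ h)]; exact h
  · rw [pear, if_neg (not_lt.mpr (le_of_lt (hT _ h)))]; exact h

lemma acyclic_parent (T : Finset (Fin n × Fin n))
    (hall : ∀ x, ∃ k, ReachIn (fun a b : Fin n => (a, b) ∈ T ∨ (b, a) ∈ T) i₀ k x) :
    AcyclicF i₀ (fun i : {i : Fin n // i ≠ i₀} =>
      parent (fun a b : Fin n => (a, b) ∈ T ∨ (b, a) ∈ T) i₀ ↑i) := by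
  set R := fun a b : Fin n => (a, b) ∈ T ∨ (b, a) ∈ T with hR
  have hFpar : Ffun i₀ (fun i : {i : Fin n // i ≠ i₀} => parent R i₀ ↑i) = parent R i₀ := by
    funext x
    rw [Ffun]
    by_cases h : x = i₀
    · rw [dif_pos h, h, parent_fixed]
    · rw [dif_neg h]
  intro x
  rw [hFpar]
  have hb := reach_bound (parent R i₀) i₀ (parent_fixed _ _) (parent_reaches _ _ hall x)
  rwa [Fintype.card_fin] at hb

end Core2

open Classical in
lemma sum_acyclic_eq_Dfun {n : ℕ} (i₀ : Fin n) (W : Fin n → Fin n → ℝ) (u : Fin n → ℝ)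
    (hsym : ∀ i j, W i j = W j i) (hnn : ∀ i j, i ≠ j → 0 ≤ W i j) :
    ∑ f ∈ Finset.univ.filter (fun f : {i : Fin n // i ≠ i₀} → Fin n => AcyclicF i₀ f),
      ∏ i : {i : Fin n // i ≠ i₀},
        (if (↑i : Fin n) = f i then (0:ℝ)
          else (1/2) * W ↑i (f i) * Real.exp (u ↑i + u (f i)))
    = ((2:ℝ) ^ (n-1))⁻¹ * Dfun n W u := by
  classical
  set Good : ({i : Fin n // i ≠ i₀} → Fin n) → Prop :=
    fun f => AcyclicF i₀ f ∧ ∀ i : {i : Fin n // i ≠ i₀}, 0 < W ↑i (f i) with hGood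
  have hsub : Finset.univ.filter Good ⊆
      Finset.univ.filter (fun f : {i : Fin n // i ≠ i₀} → Fin n => AcyclicF i₀ f) := by
    intro f hf
    rw [Finset.mem_filter] at hf ⊢
    exact ⟨hf.1, hf.2.1⟩
  have h1 : ∑ f ∈ Finset.univ.filter (fun f : {i : Fin n // i ≠ i₀} → Fin n => AcyclicF i₀ f),
      ∏ i : {i : Fin n // i ≠ i₀},
        (if (↑i : Fin n) = f i then (0:ℝ)
          else (1/2) * W ↑i (f i) * Real.exp (u ↑i + u (f i)))
      = ∑ f ∈ Finset.univ.filter Good,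
      ∏ i : {i : Fin n // i ≠ i₀},
        (if (↑i : Fin n) = f i then (0:ℝ)
          else (1/2) * W ↑i (f i) * Real.exp (u ↑i + u (f i))) := by
    refine (Finset.sum_subset hsub ?_).symm
    intro f hf hnG
    rw [Finset.mem_filter] at hf hnG
    have hac := hf.2
    have : ¬ ∀ i : {i : Fin n // i ≠ i₀}, 0 < W ↑i (f i) := by
      intro hh
      exact hnG ⟨Finset.mem_univ f, hac, hh⟩
    obtain ⟨i, hWi⟩ := not_forall.mp this
    apply Finset.prod_eq_zero (Finset.mem_univ i)
    have hne : (↑i : Fin n) ≠ f i := fun h => acyclic_ne hac i h.symm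
    rw [if_neg hne]
    have hW0 : W ↑i (f i) = 0 := le_antisymm (not_lt.mp hWi) (hnn _ _ hne)
    rw [hW0]
    ring
  rw [h1]
  have h2 : ∀ f ∈ Finset.univ.filter Good,
      (∏ i : {i : Fin n // i ≠ i₀},
        (if (↑i : Fin n) = f i then (0:ℝ)
          else (1/2) * W ↑i (f i) * Real.exp (u ↑i + u (f i))))
      = ((2:ℝ) ^ (n-1))⁻¹ *
        ∏ i : {i : Fin n // i ≠ i₀}, (W ↑i (f i) * Real.exp (u ↑i + u (f i))) := by
    intro f hf
    rw [Finset.mem_filter] at hf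
    obtain ⟨-, hac, hpos⟩ := hf
    have hstep : ∀ i : {i : Fin n // i ≠ i₀},
        (if (↑i : Fin n) = f i then (0:ℝ)
          else (1/2) * W ↑i (f i) * Real.exp (u ↑i + u (f i)))
        = (1/2) * (W ↑i (f i) * Real.exp (u ↑i + u (f i))) := by
      intro i
      rw [if_neg (fun h => acyclic_ne hac i h.symm), mul_assoc]
    rw [Finset.prod_congr rfl (fun i _ => hstep i), Finset.prod_mul_distrib,
      Finset.prod_const, Finset.card_univ, card_Vp]
    congr 1
    rw [one_div, inv_pow]
  rw [Finset.sum_congr rfl h2, ← Finset.mul_sum]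
  congr 1
  rw [Dfun]
  refine Finset.sum_nbij' (fun f => edgesOf i₀ f)
    (fun T => fun i : {i : Fin n // i ≠ i₀} =>
      parent (fun a b : Fin n => (a, b) ∈ T ∨ (b, a) ∈ T) i₀ ↑i) ?_ ?_ ?_ ?_ ?_
  · -- maps Good into Dfilter
    intro f hf
    rw [Finset.mem_filter] at hf ⊢
    obtain ⟨-, hac, hpos⟩ := hf
    refine ⟨Finset.mem_univ _, ?_, card_edges hac, edges_conn hac⟩
    intro p hp
    obtain ⟨i, -, rfl⟩ := Finset.mem_image.mp hp
    have hne : (↑i : Fin n) ≠ f i := fun h => acyclic_ne hac i h.symm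
    by_cases hlt : (↑i : Fin n) < f i
    · rw [pear, if_pos hlt]
      exact ⟨hlt, hpos i⟩
    · have hlt' : f i < ↑i := lt_of_le_of_ne (not_lt.mp hlt) (fun h => hne h.symm)
      rw [pear, if_neg hlt]
      exact ⟨hlt', by rw [hsym]; exact hpos i⟩
  · -- maps Dfilter into Good
    intro T hT
    rw [Finset.mem_filter] at hT
    obtain ⟨-, hT1, hT2, hT3⟩ := hT
    have hall : ∀ x, ∃ k, ReachIn (fun a b : Fin n => (a, b) ∈ T ∨ (b, a) ∈ T) i₀ k x :=
      fun x => reachIn_of_reflTransGen (hT3 x i₀)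
    rw [Finset.mem_filter]
    refine ⟨Finset.mem_univ _, ?_, ?_⟩
    · exact acyclic_parent T hall
    · intro i
      have hrel := (parent_spec i.2 (hall ↑i)).1
      rcases hrel with h | h
      · exact (hT1 _ h).2
      · rw [hsym]; exact (hT1 _ h).2
  · -- left inverse
    intro f hf
    rw [Finset.mem_filter] at hf
    obtain ⟨-, hac, hpos⟩ := hf
    have hT1 : ∀ p ∈ edgesOf i₀ f, p.1 < p.2 := by
      intro p hp
      obtain ⟨i, -, rfl⟩ := Finset.mem_image.mp hp
      have hne : (↑i : Fin n) ≠ f i := fun h => acyclic_ne hac i h.symm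
      by_cases hlt : (↑i : Fin n) < f i
      · rw [pear, if_pos hlt]; exact hlt
      · rw [pear, if_neg hlt]
        exact lt_of_le_of_ne (not_lt.mp hlt) (fun h => hne h.symm)
    have hall : ∀ x, ∃ k, ReachIn
        (fun a b : Fin n => (a, b) ∈ edgesOf i₀ f ∨ (b, a) ∈ edgesOf i₀ f) i₀ k x :=
      fun x => reachIn_of_reflTransGen (edges_conn hac x i₀)
    have hac' := acyclic_parent (edgesOf i₀ f) hall
    apply acyclic_unique hac' hac
    apply Finset.eq_of_subset_of_card_le
    · intro p hp
      obtain ⟨i, -, rfl⟩ := Finset.mem_image.mp hp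
      exact pear_mem_of_rel hT1 ((parent_spec i.2 (hall ↑i)).1)
    · rw [card_edges hac, card_edges hac']
  · -- right inverse
    intro T hT
    rw [Finset.mem_filter] at hT
    obtain ⟨-, hT1, hT2, hT3⟩ := hT
    have hall : ∀ x, ∃ k, ReachIn (fun a b : Fin n => (a, b) ∈ T ∨ (b, a) ∈ T) i₀ k x :=
      fun x => reachIn_of_reflTransGen (hT3 x i₀)
    have hac' := acyclic_parent T hall
    apply Finset.eq_of_subset_of_card_le
    · intro p hp
      obtain ⟨i, -, rfl⟩ := Finset.mem_image.mp hp
      exact pear_mem_of_rel (fun p hp => (hT1 p hp).1) ((parent_spec i.2 (hall ↑i)).1)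
    · rw [hT2, card_edges hac']
  · -- values
    intro f hf
    rw [Finset.mem_filter] at hf
    obtain ⟨-, hac, hpos⟩ := hf
    beta_reduce
    rw [show edgesOf i₀ f
        = Finset.univ.image (fun i : {i : Fin n // i ≠ i₀} => pear ↑i (f i)) from rfl,
      Finset.prod_image (fun x _ y _ h => edges_inj hac h)]
    refine Finset.prod_congr rfl ?_
    intro i _
    by_cases hlt : (↑i : Fin n) < f i
    · rw [pear, if_pos hlt]
    · rw [pear, if_neg hlt]
      rw [hsym (↑i) (f i), add_comm (u ↑i) (u (f i))]

theorem stmt15 (n : ℕ) (W : Fin n → Fin n → ℝ)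
    (hsym : ∀ i j, W i j = W j i) (hnn : ∀ i j, i ≠ j → 0 ≤ W i j)
    (hconn : ∀ i j : Fin n, Relation.ReflTransGen (fun a b => 0 < W a b) i j)
    (i₀ : Fin n) (u : Fin n → ℝ) (hu : u i₀ = 0)
    (β : Fin n → ℝ)
    (hβ : ∀ i, β i = ∑ k ∈ Finset.univ.filter (fun k => k ≠ i ∧ 0 < W i k),
        (1 / 2) * W i k * Real.exp (u k - u i))
    (J : Matrix (Fin n) (Fin n) ℝ)
    (hJ : J = Matrix.of fun i j =>
      if j = i₀ then (if i = i₀ then 1 else 0)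
      else if i = j then -(β i)
      else (1 / 2) * W i j * Real.exp (u j - u i)) :
    |J.det| = ((2 : ℝ) ^ (n - 1))⁻¹ * Real.exp (-2 * ∑ i, u i) * Dfun n W u := by
  classical
  set A : Fin n → Fin n → ℝ :=
    fun x y => if x = y then 0 else (1/2) * W x y * Real.exp (u x + u y) with hA
  have hAdiag : ∀ x, A x x = 0 := fun x => if_pos rfl
  set M : Matrix (Fin n) (Fin n) ℝ := Matrix.of (fun i j =>
    if j = i₀ then (if i = i₀ then (1:ℝ) else 0)
    else if i = j then -(∑ k, A i k) else A i j) with hM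
  have hexp2 : ∀ x y : Fin n, Real.exp (-2 * u x) * Real.exp (u x + u y)
      = Real.exp (u y - u x) := by
    intro x y
    rw [← Real.exp_add]
    congr 1
    ring
  have hscale : J = Matrix.of (fun i j => Real.exp (-2 * u i) * M i j) := by
    rw [hJ]
    ext i j
    simp only [Matrix.of_apply, hM]
    by_cases hj0 : j = i₀
    · rw [if_pos hj0, if_pos hj0]
      by_cases hi0 : i = i₀
      · rw [if_pos hi0, hi0, hu]
        norm_num
      · rw [if_neg hi0, mul_zero]
    · rw [if_neg hj0, if_neg hj0]
      by_cases hij : i = j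
      · rw [if_pos hij, if_pos hij, hβ i]
        have hA0 : ∀ k ∈ Finset.univ, k ∉ Finset.univ.filter
            (fun k => k ≠ i ∧ 0 < W i k) → A i k = 0 := by
          intro k _ hk
          rw [Finset.mem_filter] at hk
          push_neg at hk
          by_cases hki : k = i
          · rw [hki]; exact hAdiag i
          · have hW : W i k = 0 :=
              le_antisymm (hk (Finset.mem_univ k) hki)
                (hnn i k (fun h => hki h.symm))
            rw [hA]
            simp only []
            rw [if_neg (fun h => hki h.symm), hW]
            ring
        have hsum : ∑ k, A i k = ∑ k ∈ Finset.univ.filter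
            (fun k => k ≠ i ∧ 0 < W i k), A i k :=
          (Finset.sum_subset (Finset.filter_subset _ _) hA0).symm
        rw [hsum, mul_neg, neg_inj, Finset.mul_sum]
        refine Finset.sum_congr rfl ?_
        intro k hk
        rw [Finset.mem_filter] at hk
        rw [hA]
        simp only []
        rw [if_neg (fun h => hk.2.1 h.symm)]
        rw [← hexp2 i k]
        ring
      · rw [if_neg hij, if_neg hij, hA]
        simp only []
        rw [if_neg hij, ← hexp2 i j]
        ring
  have hdetJ : J.det = Real.exp (-2 * ∑ i, u i) * M.det := by
    rw [hscale, Matrix.det_mul_column]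
    congr 1
    rw [← Real.exp_sum]
    congr 1
    rw [← Finset.mul_sum]
  set L : Matrix {i : Fin n // i ≠ i₀} {i : Fin n // i ≠ i₀} ℝ :=
    Matrix.of (fun i j => if i = j then ∑ k, A ↑i k else -A ↑i ↑j) with hL
  have hdetM : M.det = (-1:ℝ)^(n-1) * L.det := by
    have he := Matrix.det_submatrix_equiv_self (Equiv.sumCompl (fun i : Fin n => i ≠ i₀)) M
    have hblocks : M.submatrix (Equiv.sumCompl (fun i : Fin n => i ≠ i₀))
        (Equiv.sumCompl (fun i : Fin n => i ≠ i₀)) = Matrix.fromBlocks (-L) 0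
        (Matrix.of fun (i : {i : Fin n // ¬ i ≠ i₀}) (j : {i : Fin n // i ≠ i₀}) => A ↑i ↑j)
        1 := by
      ext i j
      rcases i with i | i <;> rcases j with j | j
      · simp only [Matrix.submatrix_apply, Equiv.sumCompl_apply_inl,
          Matrix.fromBlocks_apply₁₁, hM, Matrix.of_apply, Matrix.neg_apply, hL]
        rw [if_neg j.2]
        by_cases h : i = j
        · rw [h, if_pos rfl, if_pos rfl]
        · rw [if_neg (fun hh => h (Subtype.ext hh)), if_neg h, neg_neg]
      · simp only [Matrix.submatrix_apply, Equiv.sumCompl_apply_inl,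
          Equiv.sumCompl_apply_inr, Matrix.fromBlocks_apply₁₂, hM, Matrix.of_apply,
          Matrix.zero_apply]
        rw [if_pos (not_not.mp j.2), if_neg i.2]
      · simp only [Matrix.submatrix_apply, Equiv.sumCompl_apply_inl,
          Equiv.sumCompl_apply_inr, Matrix.fromBlocks_apply₂₁, hM, Matrix.of_apply]
        rw [if_neg j.2, if_neg (by rw [not_not.mp i.2]; exact fun h => j.2 h.symm)]
      · simp only [Matrix.submatrix_apply, Equiv.sumCompl_apply_inr,
          Matrix.fromBlocks_apply₂₂, hM, Matrix.of_apply]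
        rw [if_pos (not_not.mp j.2), if_pos (not_not.mp i.2)]
        have hij : i = j := Subtype.ext ((not_not.mp i.2).trans (not_not.mp j.2).symm)
        rw [hij, Matrix.one_apply_eq]
    rw [← he, hblocks, Matrix.det_fromBlocks_zero₁₂, Matrix.det_one, mul_one,
      Matrix.det_neg, card_Vp]
  have hdetL := det_L (i₀ := i₀) A hAdiag
  rw [← hL] at hdetL
  have hDnn : (0:ℝ) ≤ ∑ f ∈ Finset.univ.filter
      (fun f : {i : Fin n // i ≠ i₀} → Fin n => AcyclicF i₀ f),
      ∏ i : {i : Fin n // i ≠ i₀}, A ↑i (f i) := by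
    refine Finset.sum_nonneg ?_
    intro f _
    refine Finset.prod_nonneg ?_
    intro i _
    rw [hA]
    simp only []
    by_cases h : (↑i : Fin n) = f i
    · rw [if_pos h]
    · rw [if_neg h]
      have := hnn ↑i (f i) h
      positivity
  have hsum := sum_acyclic_eq_Dfun i₀ W u hsym hnn
  have hsum' : ∑ f ∈ Finset.univ.filter
      (fun f : {i : Fin n // i ≠ i₀} → Fin n => AcyclicF i₀ f),
      ∏ i : {i : Fin n // i ≠ i₀}, A ↑i (f i)
      = ((2:ℝ) ^ (n-1))⁻¹ * Dfun n W u := by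
    rw [← hsum]
  rw [hdetJ, abs_mul, abs_of_pos (Real.exp_pos _), hdetM, abs_mul, abs_pow, abs_neg,
    abs_one, one_pow, one_mul, hdetL, abs_of_nonneg hDnn, hsum']
  ring
end

section
/- For any real numbers θ₁ > 0 and θ₂ ≥ 0, ∫₀^∞ exp(−θ₁x/2 − θ₂/(2x)) x^{−1/2} dx = exp(−√(θ₁θ₂)) √(2π/θ₁). -/
open MeasureTheory Real Set

lemma key_pos (a b : ℝ) (ha : 0 < a) (hb : 0 < b) :
    ∫ t in Ioi (0:ℝ), Real.exp (-a * t ^ 2 - b / t ^ 2)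
      = Real.exp (-(2 * Real.sqrt (a * b))) * Real.sqrt (π / a) / 2 := by
  set c : ℝ := Real.sqrt (b / a) with hc_def
  have hc : 0 < c := Real.sqrt_pos.2 (div_pos hb ha)
  have hc2 : a * c ^ 2 = b := by
    rw [hc_def, Real.sq_sqrt (div_pos hb ha).le]; field_simp
  have hac : a * c = Real.sqrt (a * b) := by
    rw [hc_def, ← Real.sqrt_sq ha.le, ← Real.sqrt_mul (sq_nonneg a)]
    congr 1; field_simp; rw [Real.sq_sqrt (sq_nonneg a)]
  -- the function f
  set f : ℝ → ℝ := fun t => Real.exp (-a * t ^ 2 - b / t ^ 2) with hf_def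
  -- integrability of f on Ioi 0
  have hf_cont : ContinuousOn f (Ioi 0) := by
    apply ContinuousOn.rexp
    apply ContinuousOn.sub
    · fun_prop
    · exact continuousOn_const.div (by fun_prop)
        (fun t ht => pow_ne_zero 2 (ne_of_gt ht))
  have h1 : IntegrableOn f (Ioi 0) := by
    apply Integrable.mono' ((integrable_exp_neg_mul_sq ha).restrict (s := Ioi 0))
      (hf_cont.aestronglyMeasurable measurableSet_Ioi)
    filter_upwards with t
    rw [Real.norm_eq_abs, abs_of_pos (Real.exp_pos _)]
    apply Real.exp_le_exp.2
    have : 0 ≤ b / t ^ 2 := by positivity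
    linarith
  -- the substitution ψ t = c / t
  have hψderiv : ∀ t ∈ Ioi (0:ℝ),
      HasDerivWithinAt (fun t => c / t) (-(c / t ^ 2)) (Ioi 0) t := by
    intro t ht
    have ht' : (t:ℝ) ≠ 0 := ne_of_gt ht
    have h : HasDerivAt (fun u : ℝ => c / u) (-(c / t ^ 2)) t := by
      simp only [div_eq_mul_inv]
      convert (hasDerivAt_inv ht').const_mul c using 1
      · rfl
      · rfl
      · ring
    exact h.hasDerivWithinAt
  have hψinj : InjOn (fun t => c / t) (Ioi 0) := by
    intro x hx y hy h
    simp only at h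
    rw [div_eq_div_iff (ne_of_gt hx) (ne_of_gt hy)] at h
    exact mul_left_cancel₀ (ne_of_gt hc) h.symm
  have hψimg : (fun t => c / t) '' (Ioi 0) = Ioi 0 := by
    ext u
    constructor
    · rintro ⟨t, ht, rfl⟩; exact div_pos hc ht
    · intro hu; exact ⟨c / u, div_pos hc hu, by field_simp⟩
  -- pointwise identity for the ψ-substituted integrand
  have hψpt : ∀ t ∈ Ioi (0:ℝ),
      |(-(c / t ^ 2))| • f (c / t) = c / t ^ 2 * f t := by
    intro t ht
    have ht' : (t:ℝ) ≠ 0 := ne_of_gt ht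
    rw [abs_neg, abs_of_pos (by positivity), smul_eq_mul]
    congr 1
    rw [hf_def]
    simp only
    rw [Real.exp_eq_exp, ← hc2]
    have hcne : c ≠ 0 := ne_of_gt hc
    field_simp
    ring
  have h2 : IntegrableOn (fun t => c / t ^ 2 * f t) (Ioi 0) := by
    have := (integrableOn_image_iff_integrableOn_abs_deriv_smul measurableSet_Ioi
      hψderiv hψinj f).1 (by rwa [hψimg])
    exact this.congr_fun hψpt measurableSet_Ioi
  have hB : ∫ t in Ioi (0:ℝ), f t = ∫ t in Ioi (0:ℝ), c / t ^ 2 * f t := by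
    have := integral_image_eq_integral_abs_deriv_smul measurableSet_Ioi hψderiv hψinj f
    rw [hψimg] at this
    rw [this]
    exact setIntegral_congr_fun measurableSet_Ioi hψpt
  -- the substitution φ t = t - c / t
  have hφderiv : ∀ t ∈ Ioi (0:ℝ),
      HasDerivWithinAt (fun t => t - c / t) (1 + c / t ^ 2) (Ioi 0) t := by
    intro t ht
    have ht' : (t:ℝ) ≠ 0 := ne_of_gt ht
    have h : HasDerivAt (fun u : ℝ => u - c / u) (1 + c / t ^ 2) t := by
      simp only [div_eq_mul_inv]
      convert (hasDerivAt_id t).sub ((hasDerivAt_inv ht').const_mul c) using 1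
      · rfl
      · rfl
      · rfl
      · ring
    exact h.hasDerivWithinAt
  have hφinj : InjOn (fun t => t - c / t) (Ioi 0) := by
    apply StrictMonoOn.injOn
    intro x hx y hy hxy
    simp only
    have h1 : c / y ≤ c / x := by
      rw [div_le_div_iff₀ (mem_Ioi.1 hy) (mem_Ioi.1 hx)]
      nlinarith [mem_Ioi.1 hx, mem_Ioi.1 hy]
    linarith
  have hφimg : (fun t => t - c / t) '' (Ioi 0) = univ := by
    apply eq_univ_of_forall
    intro y
    set s := Real.sqrt (y ^ 2 + 4 * c) with hs_def
    have hs2 : s ^ 2 = y ^ 2 + 4 * c := Real.sq_sqrt (by positivity)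
    have hsy : |y| < s := by
      rw [hs_def, ← Real.sqrt_sq_eq_abs]
      exact Real.sqrt_lt_sqrt (sq_nonneg y) (by linarith)
    have ht : 0 < (y + s) / 2 := by
      have := neg_abs_le y
      linarith
    refine ⟨(y + s) / 2, ht, ?_⟩
    have htn : ((y + s) / 2 : ℝ) ≠ 0 := ne_of_gt ht
    have hkey : (y + s) / 2 * ((y + s) / 2) - y * ((y + s) / 2) = c := by nlinarith [hs2]
    have hdiv : c / ((y + s) / 2) = (y + s) / 2 - y := by
      rw [div_eq_iff htn]; nlinarith [hkey]
    simp only [hdiv]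
    ring
  -- change of variables
  have hA := integral_image_eq_integral_abs_deriv_smul measurableSet_Ioi hφderiv hφinj
    (fun s => Real.exp (-a * s ^ 2))
  rw [hφimg, setIntegral_univ, integral_gaussian] at hA
  have hApt : ∀ t ∈ Ioi (0:ℝ),
      |1 + c / t ^ 2| • Real.exp (-a * (t - c / t) ^ 2)
        = Real.exp (2 * Real.sqrt (a * b)) * (f t + c / t ^ 2 * f t) := by
    intro t ht
    have ht' : (t:ℝ) ≠ 0 := ne_of_gt ht
    rw [abs_of_pos (by positivity), smul_eq_mul]
    have hexp : Real.exp (-a * (t - c / t) ^ 2)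
        = Real.exp (2 * Real.sqrt (a * b)) * f t := by
      rw [hf_def, ← Real.exp_add]
      congr 1
      rw [← hac, ← hc2]
      field_simp
      ring
    rw [hexp, hf_def]
    ring
  rw [setIntegral_congr_fun measurableSet_Ioi hApt] at hA
  rw [integral_const_mul, integral_add h1 h2, ← hB] at hA
  have h2E : (0:ℝ) < 2 * Real.exp (2 * Real.sqrt (a * b)) := by positivity
  have hK : (∫ t in Ioi (0:ℝ), f t)
      = Real.sqrt (π / a) / (2 * Real.exp (2 * Real.sqrt (a * b))) := by
    rw [eq_div_iff (ne_of_gt h2E)]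
    linear_combination -hA
  rw [hK, Real.exp_neg, inv_mul_eq_div, div_div]
  ring

lemma key (a b : ℝ) (ha : 0 < a) (hb : 0 ≤ b) :
    ∫ t in Ioi (0:ℝ), Real.exp (-a * t ^ 2 - b / t ^ 2)
      = Real.exp (-(2 * Real.sqrt (a * b))) * Real.sqrt (π / a) / 2 := by
  rcases eq_or_lt_of_le hb with hb0 | hbpos
  · simp only [← hb0, zero_div, sub_zero, mul_zero, Real.sqrt_zero, neg_zero,
      Real.exp_zero, one_mul]
    exact integral_gaussian_Ioi a
  · exact key_pos a b ha hbpos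

theorem stmt16 (θ₁ θ₂ : ℝ) (h₁ : 0 < θ₁) (h₂ : 0 ≤ θ₂) :
    ∫ x in Set.Ioi (0 : ℝ),
        Real.exp (-(θ₁ * x) / 2 - θ₂ / (2 * x)) / Real.sqrt x =
      Real.exp (-Real.sqrt (θ₁ * θ₂)) * Real.sqrt (2 * π / θ₁) := by
  have hsub := integral_comp_rpow_Ioi
    (fun x => Real.exp (-(θ₁ * x) / 2 - θ₂ / (2 * x)) / Real.sqrt x) (p := 2) two_ne_zero
  have hpt : ∀ t ∈ Ioi (0:ℝ),
      (|(2:ℝ)| * t ^ ((2:ℝ) - 1)) •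
        (Real.exp (-(θ₁ * t ^ (2:ℝ)) / 2 - θ₂ / (2 * t ^ (2:ℝ))) / Real.sqrt (t ^ (2:ℝ)))
      = 2 * Real.exp (-(θ₁ / 2) * t ^ 2 - (θ₂ / 2) / t ^ 2) := by
    intro t ht
    have ht0 : (0:ℝ) < t := ht
    have hr2 : t ^ (2:ℝ) = t ^ 2 := by
      rw [show (2:ℝ) = ((2:ℕ):ℝ) by norm_num, Real.rpow_natCast]
    rw [hr2, show ((2:ℝ) - 1) = 1 by norm_num, Real.rpow_one, smul_eq_mul,
      Real.sqrt_sq ht0.le, abs_of_pos (by norm_num : (0:ℝ) < 2)]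
    rw [show -(θ₁ * t ^ 2) / 2 - θ₂ / (2 * t ^ 2) = -(θ₁ / 2) * t ^ 2 - (θ₂ / 2) / t ^ 2 by
      field_simp]
    field_simp
  rw [← hsub, setIntegral_congr_fun measurableSet_Ioi hpt, integral_const_mul,
    key (θ₁ / 2) (θ₂ / 2) (by linarith) (by linarith)]
  have h1 : 2 * Real.sqrt (θ₁ / 2 * (θ₂ / 2)) = Real.sqrt (θ₁ * θ₂) := by
    rw [show θ₁ / 2 * (θ₂ / 2) = θ₁ * θ₂ * (1/2)^2 by ring, Real.sqrt_mul
      (by positivity), Real.sqrt_sq (by norm_num)]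
    ring
  have h2 : π / (θ₁ / 2) = 2 * π / θ₁ := by field_simp
  rw [h1, h2]
  ring
end
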